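/- arXiv:0810.0310 — 6 statements merged into one kernel-verified Lean document; each statement's English description precedes it below -/
import Mathlib

section
/- If a k-uniform word W = AB represents a graph G, then the word W' = BA also represents G (and is k-uniform). -/
/-- Letters `x` and `y` alternate in the word `W`: the subword of `W` induced by
`{x, y}` contains neither `xx` nor `yy` as a factor. -/
def Alternates {V : Type*} [DecidableEq V] (W : List V) (x y : V) : Prop :=
  List.Chain' (· ≠ ·) (W.filter (fun z => z = x ∨ z = y))

/-- The word `W` (over alphabet `V`, every letter occurring) represents the graph `G`:
distinct vertices alternate in `W` iff they are adjacent in `G`. -/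
def Represents {V : Type*} [DecidableEq V] (W : List V) (G : SimpleGraph V) : Prop :=
  (∀ v : V, v ∈ W) ∧ ∀ x y : V, x ≠ y → (G.Adj x y ↔ Alternates W x y)

/-- A word is `k`-uniform if every letter of the alphabet occurs exactly `k` times. -/
def IsKUniform {V : Type*} [DecidableEq V] (W : List V) (k : ℕ) : Prop :=
  ∀ v : V, W.count v = k

/-!
Fix distinct letters `x`, `y` and let `F` be the subword of `W = AB` induced by them, so the
subword induced in `BA` is the rotation `F_B F_A` of `F = F_A F_B`. In a `k`-uniform word, `F` has
length `2k`. An alternating word of even length begins and ends with different letters, so if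
`F` alternates then the new junction (last letter of `F_B`, first letter of `F_A`) is also an
alternation, and the rotated subword alternates as well.
-/

section

variable {V : Type*} {x y : V}

lemma eq_iff_ne_of_mem_pair (hxy : x ≠ y) {a b c : V} (ha : a = x ∨ a = y)
    (hb : b = x ∨ b = y) (hc : c = x ∨ c = y) (hab : a ≠ b) : c = a ↔ c ≠ b := by
  rcases ha with rfl | rfl <;> rcases hb with rfl | rfl <;> rcases hc with rfl | rfl <;>
    simp_all [eq_comm]

lemma getLast_cons_eq_iff_even_of_isChain_ne (hxy : x ≠ y) {a : V} {t : List V}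
    (hmem : ∀ z ∈ a :: t, z = x ∨ z = y) (hchain : (a :: t).IsChain (· ≠ ·)) :
    (a :: t).getLast (List.cons_ne_nil a t) = a ↔ Even t.length := by
  induction t generalizing a with
  | nil => simp
  | cons b t ih =>
    rw [List.isChain_cons_cons] at hchain
    have hb : ∀ z ∈ b :: t, z = x ∨ z = y := fun z hz => hmem z (List.mem_cons_of_mem a hz)
    rw [List.getLast_cons_cons, List.length_cons, Nat.even_add_one, ← ih hb hchain.2]
    exact eq_iff_ne_of_mem_pair hxy (hmem a List.mem_cons_self) (hb b List.mem_cons_self)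
      (hb _ (List.getLast_mem _)) hchain.1

lemma isChain_ne_append_comm (hxy : x ≠ y) {L₁ L₂ : List V}
    (hmem : ∀ z ∈ L₁ ++ L₂, z = x ∨ z = y) (heven : Even (L₁ ++ L₂).length)
    (hchain : (L₁ ++ L₂).IsChain (· ≠ ·)) : (L₂ ++ L₁).IsChain (· ≠ ·) := by
  rcases L₁ with _ | ⟨a, t⟩
  · simpa using hchain
  obtain ⟨h₁, h₂, -⟩ := List.isChain_append.1 hchain
  refine List.isChain_append.2 ⟨h₂, h₁, ?_⟩
  intro b hb c hc hbc
  obtain rfl : a = c := Option.some_inj.1 hc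
  obtain ⟨hL₂, rfl⟩ := List.mem_getLast?_eq_getLast hb
  have hlast : (a :: (t ++ L₂)).getLast (List.cons_ne_nil _ _) = a :=
    (List.getLast_append_of_ne_nil (l := a :: t) _ hL₂).trans hbc
  rw [List.cons_append, List.length_cons, Nat.even_add_one] at heven
  exact heven ((getLast_cons_eq_iff_even_of_isChain_ne hxy hmem hchain).1 hlast)

lemma length_filter_eq_or_eq [DecidableEq V] (hxy : x ≠ y) (W : List V) :
    (W.filter (fun z => z = x ∨ z = y)).length = W.count x + W.count y := by
  induction W with
  | nil => simp
  | cons a W ih =>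
    rw [List.filter_cons, List.count_cons, List.count_cons]
    by_cases hx : a = x <;> by_cases hy : a = y <;> simp_all <;> omega

lemma alternates_append_comm [DecidableEq V] (hxy : x ≠ y) {A B : List V}
    (hcount : (A ++ B).count x = (A ++ B).count y) (h : Alternates (A ++ B) x y) :
    Alternates (B ++ A) x y := by
  unfold Alternates at h ⊢
  rw [List.filter_append] at h ⊢
  refine isChain_ne_append_comm hxy (fun z hz => ?_) ?_ h
  · rw [← List.filter_append, List.mem_filter, decide_eq_true_iff] at hz
    exact hz.2
  · rw [← List.filter_append, length_filter_eq_or_eq hxy, hcount]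
    exact ⟨_, rfl⟩

end

/-- If a `k`-uniform word `W = A ++ B` represents a graph `G`, then the word `B ++ A`
also represents `G` and is `k`-uniform. -/
theorem stmt0 {V : Type*} [DecidableEq V] (G : SimpleGraph V) (A B : List V) (k : ℕ)
    (huni : IsKUniform (A ++ B) k) (hrep : Represents (A ++ B) G) :
    IsKUniform (B ++ A) k ∧ Represents (B ++ A) G := by
  have hperm : (B ++ A).Perm (A ++ B) := List.perm_append_comm
  have hcount {x y : V} (W : List V) (hW : W.Perm (A ++ B)) : W.count x = W.count y := by
    rw [hW.count_eq, hW.count_eq, huni x, huni y]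
  refine ⟨fun v => (hperm.count_eq v).trans (huni v),
    fun v => hperm.mem_iff.2 (hrep.1 v), fun x y hxy => ?_⟩
  rw [hrep.2 x y hxy]
  exact ⟨alternates_append_comm hxy (hcount _ (List.Perm.refl _)),
    alternates_append_comm hxy (hcount _ hperm)⟩
end

section
/- A graph is permutationally representable if and only if it is a comparability graph, i.e., it admits a transitive orientation of its edges. -/
/-- `P` is a permutation word: every letter of the alphabet occurs exactly once. -/
def IsPermutationWord {V : Type*} [DecidableEq V] (P : List V) : Prop :=
  ∀ v : V, P.count v = 1

/-- A graph is permutationally representable if a concatenation of (at least one)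
permutations of its vertex set represents it. -/
def PermutationallyRepresentable {V : Type*} [DecidableEq V] (G : SimpleGraph V) : Prop :=
  ∃ Ps : List (List V), Ps ≠ [] ∧ (∀ P ∈ Ps, IsPermutationWord P) ∧ Represents Ps.flatten G

/-- A graph is permutationally `k`-representable if a concatenation of `k` permutations
of its vertex set represents it. -/
def PermutationallyKRepresentable {V : Type*} [DecidableEq V] (G : SimpleGraph V) (k : ℕ) : Prop :=
  ∃ Ps : List (List V), Ps.length = k ∧ (∀ P ∈ Ps, IsPermutationWord P) ∧ Represents Ps.flatten G
/-- `D` is an orientation of the graph `G`: every arc lies on an edge, every edge is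
oriented in exactly one direction. -/
structure IsOrientation {V : Type*} (G : SimpleGraph V) (D : V → V → Prop) : Prop where
  adj_of_arc : ∀ u v, D u v → G.Adj u v
  arc_of_adj : ∀ u v, G.Adj u v → D u v ∨ D v u
  asymm : ∀ u v, D u v → ¬ D v u

/-- A digraph (relation) is acyclic: no directed cycle, i.e. the transitive closure
is irreflexive. -/
def DigraphAcyclic {V : Type*} (D : V → V → Prop) : Prop :=
  ∀ v : V, ¬ Relation.TransGen D v v

/-- The digraph `D` has a shortcut: distinct vertices `v 0, …, v t` (`t ≥ 3`) forming a
directed path, together with the arc `v 0 → v t`, such that some arc `v i → v j` with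
`i < j` is missing. -/
def HasShortcut {V : Type*} (D : V → V → Prop) : Prop :=
  ∃ (t : ℕ) (v : ℕ → V), 3 ≤ t ∧
    (∀ i j, i ≤ t → j ≤ t → i ≠ j → v i ≠ v j) ∧
    (∀ i, i < t → D (v i) (v (i + 1))) ∧
    D (v 0) (v t) ∧
    ∃ i j, i < j ∧ j ≤ t ∧ ¬ D (v i) (v j)

/-- A digraph is semi-transitive if it is acyclic and has no shortcut. -/
def SemiTransitive {V : Type*} (D : V → V → Prop) : Prop :=
  DigraphAcyclic D ∧ ¬ HasShortcut D

/-!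
In a permutation word `P`, "`x` precedes `y`" is `[x, y] <+ P`, a strict linear order on the
alphabet. In a concatenation of permutation words, the subword on `{x, y}` is a concatenation of
blocks `xy` and `yx`, so `x` and `y` alternate iff every permutation puts them in the same order.
Hence the first permutation, restricted to the edges, is a transitive orientation. Conversely,
given a transitive orientation `D`, concatenate linear extensions of `D`: one extension per
ordered non-adjacent pair `(a, b)` placing `a` before `b` (possible since `a`, `b` are
`D`-incomparable) makes exactly the non-adjacent pairs fail to alternate.
-/

namespace List
variable {α : Type*} {l : List α} {a b c d : α}

theorem pair_sublist_cons_iff : [a, b] <+ d :: l ↔ [a, b] <+ l ∨ (a = d ∧ b ∈ l) := by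
  simp [sublist_cons_iff, eq_comm]

theorem pair_sublist_or_pair_sublist (ha : a ∈ l) (hb : b ∈ l) (hab : a ≠ b) :
    [a, b] <+ l ∨ [b, a] <+ l := by
  induction l with
  | nil => simp at ha
  | cons d l ih =>
    simp only [pair_sublist_cons_iff]
    rcases mem_cons.mp ha with rfl | ha' <;> rcases mem_cons.mp hb with rfl | hb'
    · exact absurd rfl hab
    · exact .inl (.inr ⟨rfl, hb'⟩)
    · exact .inr (.inr ⟨rfl, ha'⟩)
    · exact (ih ha' hb').imp .inl .inl

theorem Nodup.ne_of_pair_sublist (hl : l.Nodup) (h : [a, b] <+ l) : a ≠ b := by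
  rintro rfl
  exact nodup_iff_sublist.mp hl a h

theorem Nodup.not_pair_sublist_swap (hl : l.Nodup) (h : [a, b] <+ l) : ¬ [b, a] <+ l := by
  induction l with
  | nil => simp at h
  | cons d l ih =>
    rw [nodup_cons] at hl
    rw [pair_sublist_cons_iff] at h ⊢
    rintro (h' | ⟨rfl, ha⟩) <;> rcases h with h | ⟨rfl, hb⟩
    · exact ih hl.2 h h'
    · exact hl.1 (h'.subset (by simp))
    · exact hl.1 (h.subset (by simp))
    · exact hl.1 ha

theorem Nodup.pair_sublist_trans (hl : l.Nodup) (hab : [a, b] <+ l) (hbc : [b, c] <+ l) :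
    [a, c] <+ l := by
  induction l with
  | nil => simp at hab
  | cons d l ih =>
    rw [nodup_cons] at hl
    rw [pair_sublist_cons_iff] at hab hbc ⊢
    rcases hbc with hbc | ⟨rfl, hc⟩ <;> rcases hab with hab | ⟨rfl, hb⟩
    · exact .inl (ih hl.2 hab hbc)
    · exact .inr ⟨rfl, hbc.subset (by simp)⟩
    · exact absurd (hab.subset (by simp)) hl.1
    · exact absurd hb hl.1

theorem Nodup.filter_eq_pair_iff (hl : l.Nodup) {p : α → Bool}
    (hp : ∀ z, p z ↔ z = a ∨ z = b) :
    l.filter p = [a, b] ↔ [a, b] <+ l := by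
  refine ⟨fun h => h ▸ filter_sublist, fun h => ?_⟩
  have hsub : [a, b] <+ l.filter p := by simpa [filter_cons, hp] using h.filter p
  refine (hsub.eq_of_length_le ((hl.filter p).subperm fun z hz => ?_).length_le).symm
  simpa [hp] using (mem_filter.mp hz).2

theorem isChain_ne_flatten_iff {x y : α} (hxy : x ≠ y) {L : List (List α)}
    (hL : ∀ l ∈ L, l = [x, y] ∨ l = [y, x]) :
    IsChain (· ≠ ·) L.flatten ↔ (∀ l ∈ L, l = [x, y]) ∨ (∀ l ∈ L, l = [y, x]) := by
  have hblock : ∀ l ∈ L, IsChain (· ≠ ·) l := by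
    intro l hl
    rcases hL l hl with rfl | rfl <;> simp [hxy, hxy.symm]
  have hjunction : ∀ l₁ l₂, l₁ ∈ L → l₂ ∈ L →
      ((∀ a ∈ l₁.getLast?, ∀ b ∈ l₂.head?, a ≠ b) ↔ l₁ = l₂) := by
    intro l₁ l₂ h₁ h₂
    rcases hL l₁ h₁ with rfl | rfl <;> rcases hL l₂ h₂ with rfl | rfl <;>
      simp [hxy, hxy.symm]
  rw [isChain_flatten (fun h => by simpa using hL [] h), and_iff_right hblock,
    IsChain.iff_of_mem_imp hjunction, isChain_eq_iff_eq_replicate]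
  cases L with
  | nil => simp
  | cons l L =>
    simp only [head?_cons, Option.mem_some_iff, forall_eq', eq_replicate_iff, length_cons,
      true_and]
    rcases hL l mem_cons_self with rfl | rfl
    · exact (or_iff_left fun h => by simpa [hxy] using h _ mem_cons_self).symm
    · exact (or_iff_right fun h => by simpa [hxy.symm] using h _ mem_cons_self).symm

end List

open scoped List

section PermutationWord
variable {V : Type*} [DecidableEq V] {P : List V} {Ps : List (List V)} {x y : V}

theorem IsPermutationWord.nodup (hP : IsPermutationWord P) : P.Nodup :=
  List.nodup_iff_count_le_one.mpr fun v => (hP v).le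

theorem IsPermutationWord.mem (hP : IsPermutationWord P) (v : V) : v ∈ P :=
  List.count_pos_iff.mp (by rw [hP v]; exact Nat.one_pos)

theorem IsPermutationWord.pair_sublist_or (hP : IsPermutationWord P) (hxy : x ≠ y) :
    [x, y] <+ P ∨ [y, x] <+ P :=
  List.pair_sublist_or_pair_sublist (hP.mem x) (hP.mem y) hxy

theorem alternates_flatten_iff (hPs : ∀ P ∈ Ps, IsPermutationWord P) (hxy : x ≠ y) :
    Alternates Ps.flatten x y ↔ (∀ P ∈ Ps, [x, y] <+ P) ∨ (∀ P ∈ Ps, [y, x] <+ P) := by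
  have hrestrict : ∀ P ∈ Ps,
      (P.filter (fun z => z = x ∨ z = y) = [x, y] ↔ [x, y] <+ P) ∧
      (P.filter (fun z => z = x ∨ z = y) = [y, x] ↔ [y, x] <+ P) := fun P hP =>
    ⟨(hPs P hP).nodup.filter_eq_pair_iff (by simp),
      (hPs P hP).nodup.filter_eq_pair_iff (by simp [or_comm])⟩
  rw [Alternates, List.Chain', List.filter_flatten, List.isChain_ne_flatten_iff hxy]
  · simp only [List.forall_mem_map]
    exact or_congr (forall₂_congr fun P hP => (hrestrict P hP).1)
      (forall₂_congr fun P hP => (hrestrict P hP).2)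
  · simp only [List.forall_mem_map]
    intro P hP
    exact ((hPs P hP).pair_sublist_or hxy).imp (hrestrict P hP).1.mpr (hrestrict P hP).2.mpr

theorem not_alternates_of_pair_sublist (hPs : ∀ P ∈ Ps, IsPermutationWord P) {Q : List V}
    (hP : P ∈ Ps) (hQ : Q ∈ Ps) (hxy : [x, y] <+ P) (hyx : [y, x] <+ Q) :
    ¬ Alternates Ps.flatten x y := by
  rw [alternates_flatten_iff hPs ((hPs P hP).nodup.ne_of_pair_sublist hxy)]
  rintro (h | h)
  · exact (hPs Q hQ).nodup.not_pair_sublist_swap (h Q hQ) hyx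
  · exact (hPs P hP).nodup.not_pair_sublist_swap (h P hP) hxy

theorem pair_sublist_of_alternates (hPs : ∀ P ∈ Ps, IsPermutationWord P)
    (halt : Alternates Ps.flatten x y) {P₀ : List V} (hP₀ : P₀ ∈ Ps) (h : [x, y] <+ P₀) :
    ∀ P ∈ Ps, [x, y] <+ P := fun P hP =>
  ((hPs P hP).pair_sublist_or ((hPs P₀ hP₀).nodup.ne_of_pair_sublist h)).resolve_right
    fun hyx => not_alternates_of_pair_sublist hPs hP₀ hP h hyx halt

end PermutationWord

section LinearExtension
variable {V : Type*} [DecidableEq V] [Fintype V] (R : V → V → Prop) [IsStrictOrder V R]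

theorem IsStrictOrder.exists_isPermutationWord :
    ∃ P : List V, IsPermutationWord P ∧ ∀ x y, R x y → [x, y] <+ P := by
  classical
  let _ := partialOrderOfSO R
  obtain ⟨s, _, hle⟩ := extend_partialOrder ((· ≤ ·) : V → V → Prop)
  let P := Finset.univ.sort s
  have hP : IsPermutationWord P := fun v =>
    List.count_eq_one_of_mem (Finset.sort_nodup _ s) (by simp [P])
  refine ⟨P, hP, fun x y hxy =>
    (hP.pair_sublist_or (ne_of_irrefl hxy)).resolve_right fun hyx => ne_of_irrefl hxy ?_⟩
  exact antisymm (hle x y (Or.inr hxy)) ((Finset.pairwise_sort _ s).forall_sublist hyx)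

theorem IsStrictOrder.exists_isPermutationWord_of_not_rel {a b : V} (hab : a ≠ b)
    (hba : ¬ R b a) :
    ∃ P : List V, IsPermutationWord P ∧ (∀ x y, R x y → [x, y] <+ P) ∧ [a, b] <+ P := by
  -- `R` together with the arc `a → b`, transitively closed
  let E x y := R x y ∨ (Relation.ReflGen R x a ∧ Relation.ReflGen R b y)
  have hE : IsStrictOrder V E :=
    { irrefl v := by
        rintro (h | ⟨hva, hbv⟩)
        · exact irrefl v h
        · rcases _root_.trans hbv hva with _ | h
          · exact hab rfl
          · exact hba h
      trans x y z := by
        rintro (hxy | ⟨hxa, hby⟩) (hyz | ⟨hya, hbz⟩)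
        · exact .inl (_root_.trans hxy hyz)
        · exact .inr ⟨_root_.trans (Relation.ReflGen.single hxy) hya, hbz⟩
        · exact .inr ⟨hxa, _root_.trans hby (Relation.ReflGen.single hyz)⟩
        · exact .inr ⟨hxa, hbz⟩ }
  obtain ⟨P, hP, hEP⟩ := hE.exists_isPermutationWord
  exact ⟨P, hP, fun x y h => hEP x y (.inl h), hEP a b (.inr ⟨.refl, .refl⟩)⟩

end LinearExtension

section Comparability
variable {V : Type*} [DecidableEq V] {G : SimpleGraph V}

theorem PermutationallyRepresentable.exists_transitive_orientation
    (hG : PermutationallyRepresentable G) :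
    ∃ D : V → V → Prop, IsOrientation G D ∧ (∀ u v w, D u v → D v w → D u w) := by
  obtain ⟨Ps, hne, hPs, -, hrep⟩ := hG
  obtain ⟨P₀, hP₀⟩ := List.exists_mem_of_ne_nil Ps hne
  have hP₀perm := hPs P₀ hP₀
  refine ⟨fun x y => G.Adj x y ∧ [x, y] <+ P₀, ⟨fun _ _ h => h.1, fun x y hxy => ?_,
    fun x y h h' => hP₀perm.nodup.not_pair_sublist_swap h.2 h'.2⟩, ?_⟩
  · exact (hP₀perm.pair_sublist_or hxy.ne).imp (⟨hxy, ·⟩) (⟨hxy.symm, ·⟩)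
  rintro u v w ⟨huv, huv₀⟩ ⟨hvw, hvw₀⟩
  have huv_all := pair_sublist_of_alternates hPs ((hrep u v huv.ne).mp huv) hP₀ huv₀
  have hvw_all := pair_sublist_of_alternates hPs ((hrep v w hvw.ne).mp hvw) hP₀ hvw₀
  have huw_all : ∀ P ∈ Ps, [u, w] <+ P := fun P hP =>
    (hPs P hP).nodup.pair_sublist_trans (huv_all P hP) (hvw_all P hP)
  have huw : u ≠ w := hP₀perm.nodup.ne_of_pair_sublist (huw_all P₀ hP₀)
  exact ⟨(hrep u w huw).mpr ((alternates_flatten_iff hPs huw).mpr (.inl huw_all)),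
    huw_all P₀ hP₀⟩

theorem permutationallyRepresentable_of_transitive_orientation [Fintype V]
    {D : V → V → Prop} (hD : IsOrientation G D)
    (htrans : ∀ u v w, D u v → D v w → D u w) :
    PermutationallyRepresentable G := by
  classical
  have : IsStrictOrder V D :=
    { irrefl v h := G.irrefl (hD.adj_of_arc v v h), trans := htrans }
  let NonEdge := {p : V × V // p.1 ≠ p.2 ∧ ¬ G.Adj p.1 p.2}
  have hsep (p : NonEdge) : ∃ P : List V, IsPermutationWord P ∧
      (∀ x y, D x y → [x, y] <+ P) ∧ [p.1.1, p.1.2] <+ P :=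
    IsStrictOrder.exists_isPermutationWord_of_not_rel D p.2.1
      fun h => p.2.2 (hD.adj_of_arc _ _ h).symm
  choose F hF hFD hFsep using hsep
  obtain ⟨P₀, hP₀, hP₀D⟩ := IsStrictOrder.exists_isPermutationWord D
  let Ps := P₀ :: (Finset.univ : Finset NonEdge).toList.map F
  have hmem (p : NonEdge) : F p ∈ Ps := by simp [Ps]
  have hPs : ∀ P ∈ Ps, IsPermutationWord P := by simp [Ps, hP₀, hF]
  have hPsD : ∀ P ∈ Ps, ∀ x y, D x y → [x, y] <+ P := by simpa [Ps] using ⟨hP₀D, hFD⟩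
  refine ⟨Ps, List.cons_ne_nil _ _, hPs, fun v => List.mem_flatten.mpr ⟨P₀, by simp [Ps],
    hP₀.mem v⟩, fun x y hxy => ⟨fun hadj => ?_, fun halt => ?_⟩⟩
  · rw [alternates_flatten_iff hPs hxy]
    exact (hD.arc_of_adj x y hadj).imp (fun h P hP => hPsD P hP x y h)
      (fun h P hP => hPsD P hP y x h)
  · by_contra hnadj
    let pxy : NonEdge := ⟨(x, y), hxy, hnadj⟩
    let pyx : NonEdge := ⟨(y, x), hxy.symm, fun h => hnadj h.symm⟩
    exact not_alternates_of_pair_sublist hPs (hmem pxy) (hmem pyx) (hFsep pxy) (hFsep pyx) halt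

end Comparability

/-- A (finite) graph is permutationally representable if and only if it is a
comparability graph, i.e. it admits a transitive orientation of its edges. -/
theorem stmt2 {V : Type*} [Fintype V] [DecidableEq V] (G : SimpleGraph V) :
    PermutationallyRepresentable G ↔
      ∃ D : V → V → Prop, IsOrientation G D ∧ (∀ u v w, D u v → D v w → D u w) :=
  ⟨PermutationallyRepresentable.exists_transitive_orientation,
    fun ⟨_, hD, htrans⟩ => permutationallyRepresentable_of_transitive_orientation hD htrans⟩
end

section
/- If S is a word representing a graph G, then the orientation of G directing every edge xy from x to y whenever the first occurrence of x in S precedes the first occurrence of y yields a semi-transitive digraph. -/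
/-!
An arc `x → y` means that `x` and `y` alternate in `S` with `x` first; in counting form, every
prefix of `S` contains `x` as often as `y` or once more (`Leads`). Along a directed path
`v 0 → ⋯ → v t` these prefix counts decrease, while the arc `v 0 → v t` bounds the count of
`v 0` by that of `v t` plus one. Hence `v i` leads `v j` for all `i < j`, i.e. the arc
`v i → v j` is present, and there is no shortcut. Acyclicity holds because arcs increase the
position of the first occurrence.
-/

theorem digraphAcyclic_of_lt {V α : Type*} [Preorder α] {D : V → V → Prop} (f : V → α)
    (hf : ∀ u v, D u v → f u < f v) : DigraphAcyclic D := fun v hv => by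
  have hlt := hv.lift f hf
  rw [Relation.transGen_eq_self] at hlt
  exact lt_irrefl (f v) hlt

section Leads

variable {V : Type*} [DecidableEq V]

/-- Counting form of "`x` and `y` alternate in `W`, starting with `x`": every prefix of `W`
contains as many `x` as `y`, or one more. -/
def Leads (W : List V) (x y : V) : Prop :=
  ∀ n, (W.take n).count y ≤ (W.take n).count x ∧ (W.take n).count x ≤ (W.take n).count y + 1

theorem leads_cons_iff {a x y : V} {W : List V} :
    Leads (a :: W) x y ↔ ∀ n, (a :: W.take n).count y ≤ (a :: W.take n).count x ∧
      (a :: W.take n).count x ≤ (a :: W.take n).count y + 1 := by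
  refine ⟨fun h n => h (n + 1), fun h n => ?_⟩
  cases n with
  | zero => simp
  | succ n => exact h n

theorem leads_cons_self {x y : V} {W : List V} (hxy : x ≠ y) :
    Leads (x :: W) x y ↔ Leads W y x := by
  simp only [leads_cons_iff, List.count_cons_self, List.count_cons_of_ne hxy]
  exact forall_congr' fun n => by omega

theorem not_leads_cons_right {x y : V} {W : List V} (hxy : x ≠ y) : ¬ Leads (y :: W) x y := by
  intro h
  simpa [List.count_cons_of_ne hxy.symm] using (h 1).1

theorem leads_cons_of_ne {a x y : V} {W : List V} (hx : a ≠ x) (hy : a ≠ y) :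
    Leads (a :: W) x y ↔ Leads W x y := by
  simp only [leads_cons_iff, List.count_cons_of_ne hx, List.count_cons_of_ne hy]
  rfl

theorem alternates_comm (W : List V) (x y : V) : Alternates W x y ↔ Alternates W y x := by
  simp only [Alternates, or_comm]

theorem head?_filter_ne_some_iff {x y : V} (hxy : x ≠ y) (W : List V) :
    (W.filter (fun z => z = x ∨ z = y)).head? ≠ some y ↔ W.idxOf x ≤ W.idxOf y := by
  induction W with
  | nil => simp
  | cons a W ih =>
    by_cases hax : a = x
    · subst hax
      simp [List.filter_cons_of_pos, hxy]
    by_cases hay : a = y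
    · subst hay
      simp [List.filter_cons_of_pos, List.idxOf_cons_ne _ hax]
    rw [List.filter_cons_of_neg (by simpa using ⟨hax, hay⟩), ih, List.idxOf_cons_ne _ hax,
      List.idxOf_cons_ne _ hay, Nat.succ_le_succ_iff]

theorem alternates_cons_self {x y : V} (hxy : x ≠ y) (W : List V) :
    Alternates (x :: W) x y ↔ Alternates W y x ∧ W.idxOf y ≤ W.idxOf x := by
  have hswap : W.filter (fun z => z = y ∨ z = x) = W.filter (fun z => z = x ∨ z = y) := by
    simp only [or_comm]
  rw [alternates_comm W, Alternates, Alternates, List.filter_cons_of_pos (by simp), List.Chain',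
    List.isChain_cons, and_comm, ← head?_filter_ne_some_iff hxy.symm, hswap]
  refine and_congr Iff.rfl ?_
  cases (W.filter fun z => z = x ∨ z = y).head? <;> simp [eq_comm]

theorem alternates_cons_of_ne {a x y : V} (hx : a ≠ x) (hy : a ≠ y) (W : List V) :
    Alternates (a :: W) x y ↔ Alternates W x y := by
  rw [Alternates, List.filter_cons_of_neg (by simpa using ⟨hx, hy⟩), Alternates]

theorem leads_iff_alternates {x y : V} (hxy : x ≠ y) (W : List V) :
    Leads W x y ↔ Alternates W x y ∧ W.idxOf x ≤ W.idxOf y := by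
  induction W generalizing x y with
  | nil => exact iff_of_true (fun n => by simp) ⟨List.IsChain.nil, le_rfl⟩
  | cons a W ih =>
    by_cases hax : a = x
    · subst hax
      simp [leads_cons_self hxy, ih hxy.symm, alternates_cons_self hxy]
    by_cases hay : a = y
    · subst hay
      simp [not_leads_cons_right hxy, List.idxOf_cons_ne _ hax]
    rw [leads_cons_of_ne hax hay, ih hxy, alternates_cons_of_ne hax hay, List.idxOf_cons_ne _ hax,
      List.idxOf_cons_ne _ hay, Nat.succ_le_succ_iff]

theorem Leads.of_path {W : List V} {v : ℕ → V} {t : ℕ}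
    (hpath : ∀ k < t, Leads W (v k) (v (k + 1))) (hlast : Leads W (v 0) (v t))
    {i j : ℕ} (hij : i ≤ j) (hjt : j ≤ t) : Leads W (v i) (v j) := by
  intro n
  have hanti : ∀ p q, p ≤ q → q ≤ t → (W.take n).count (v q) ≤ (W.take n).count (v p) := by
    intro p q hpq
    induction q, hpq using Nat.le_induction with
    | base => exact fun _ => le_rfl
    | succ q _ ih => exact fun hq => ((hpath q hq n).1).trans (ih (Nat.le_of_succ_le hq))
  have h0i := hanti 0 i (Nat.zero_le i) (hij.trans hjt)
  have hij' := hanti i j hij hjt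
  have hjt' := hanti j t hjt le_rfl
  have h0t := (hlast n).2
  constructor <;> omega

theorem Represents.adj_and_idxOf_lt_iff_leads {G : SimpleGraph V} {S : List V}
    (h : Represents S G) {x y : V} (hxy : x ≠ y) :
    G.Adj x y ∧ S.idxOf x < S.idxOf y ↔ Leads S x y := by
  rw [leads_iff_alternates hxy, ← h.2 x y hxy]
  refine and_congr Iff.rfl ⟨le_of_lt, fun hle => hle.lt_of_ne ?_⟩
  exact fun heq => hxy ((List.idxOf_inj (h.1 x)).1 heq)

end Leads

/-- If `S` represents `G`, then orienting every edge `xy` from `x` to `y` whenever the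
first occurrence of `x` in `S` precedes the first occurrence of `y` yields a
semi-transitive digraph. -/
theorem stmt5 {V : Type*} [DecidableEq V] (G : SimpleGraph V) (S : List V)
    (h : Represents S G) :
    SemiTransitive (fun u v => G.Adj u v ∧ S.idxOf u < S.idxOf v) := by
  refine ⟨digraphAcyclic_of_lt S.idxOf fun _ _ huv => huv.2, ?_⟩
  rintro ⟨t, v, -, hinj, hpath, hlast, i, j, hij, hjt, hmiss⟩
  have hleads {a b : V} (hab : G.Adj a b ∧ S.idxOf a < S.idxOf b) : Leads S a b :=
    (h.adj_and_idxOf_lt_iff_leads hab.1.ne).1 hab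
  have hvij : Leads S (v i) (v j) :=
    Leads.of_path (fun k hk => hleads (hpath k hk)) (hleads hlast) hij.le hjt
  exact hmiss ((h.adj_and_idxOf_lt_iff_leads (hinj i j (by omega) hjt hij.ne)).2 hvij)
end

section
/- For every k >= 2, the graph G_k obtained from the cocktail party graph H_{k,k} (the complete bipartite graph K_{k,k} minus a perfect matching) by adding a vertex adjacent to all vertices has representation number exactly k; that is, G_k is k-representable but not (k-1)-representable. -/
/-- A graph is `k`-representable if some `k`-uniform word represents it. -/
def KRepresentable {V : Type*} [DecidableEq V] (G : SimpleGraph V) (k : ℕ) : Prop :=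
  ∃ W : List V, IsKUniform W k ∧ Represents W G

/-- A graph is representable if some word represents it. -/
def Representable {V : Type*} [DecidableEq V] (G : SimpleGraph V) : Prop :=
  ∃ W : List V, Represents W G

/-- The graph `G_k`: the cocktail party graph `H_{k,k}` (vertices
`a_1, …, a_k, b_1, …, b_k` with `a_i` adjacent to `b_j` iff `i ≠ j`) together with an
all-adjacent vertex `none`. -/
def cocktailCone (k : ℕ) : SimpleGraph (Option (Fin k ⊕ Fin k)) :=
  SimpleGraph.fromRel (fun x y =>
    match x, y with
    | none, some _ => True
    | some (Sum.inl i), some (Sum.inr j) => i ≠ j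
    | _, _ => False)

/-!
A word represents `G_k` with every letter occurring `k` times: take the blocks
`z (a_i)_{i ≠ m} b_m a_m (b_j)_{j ≠ m}` for `m < k`, `z` the apex. In every block `a_i` precedes
`b_j` for `i ≠ j`, block `m` reverses the pair `a_m, b_m`, and blocks `i` and `j` order
`a_i, a_j` (and `b_i, b_j`) in opposite ways.

Conversely, a cyclic shift of a uniform representant is again one, so a `(k-1)`-uniform
representant may be taken to start with `z`. Since `z` alternates with every letter, its `k-1`
occurrences cut the word into `k-1` permutations of the alphabet, and two letters alternate iff
they appear in the same order in all of them. Then each `a_i` lies below all `b_j` (`j ≠ i`) in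
every order or above all of them, and for `k ≥ 3` the same alternative holds for every `i`.
Each pair `a_i, b_i` must be ordered against this alternative by some order, and no order does
so for two pairs, so there are at least `k` orders: the standard example `S_k` has dimension `k`.
-/

open List

section SameOrder

open Function

def SameOrder {ι β : Type*} (pos : ι → β → ℕ) (x y : β) : Prop :=
  (∀ m, pos m x < pos m y) ∨ (∀ m, pos m y < pos m x)

variable {ι β : Type*} {pos : ι → β → ℕ}

theorem SameOrder.symm {x y : β} (h : SameOrder pos x y) : SameOrder pos y x :=
  Or.symm h

theorem not_sameOrder_of_lt_of_lt {m m' : ι} {x y : β} (h : pos m x < pos m y)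
    (h' : pos m' y < pos m' x) : ¬ SameOrder pos x y := by
  rintro (hxy | hyx)
  · exact lt_asymm (hxy m') h'
  · exact lt_asymm h (hyx m)

theorem exists_lt_of_not_sameOrder (hinj : ∀ m, Injective (pos m)) {x y : β} (hxy : x ≠ y)
    (h : ¬ SameOrder pos x y) : ∃ m, pos m y < pos m x := by
  obtain ⟨m, hm⟩ := not_forall.1 (not_or.1 h).1
  exact ⟨m, lt_of_le_of_ne (not_lt.1 hm) fun he => hxy (hinj m he).symm⟩

theorem two_le_card_of_not_sameOrder [Fintype ι] (hinj : ∀ m, Injective (pos m)) {x y : β}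
    (hxy : x ≠ y) (h : ¬ SameOrder pos x y) : 2 ≤ Fintype.card ι := by
  obtain ⟨m, hm⟩ := exists_lt_of_not_sameOrder hinj hxy h
  obtain ⟨m', hm'⟩ := exists_lt_of_not_sameOrder hinj hxy.symm fun h' => h h'.symm
  have : Nontrivial ι := ⟨⟨m, m', by rintro rfl; omega⟩⟩
  exact Fintype.one_lt_card

end SameOrder

section Words

variable {α : Type*}

theorem isChain_ne_append_flatten_pairs {x y : α} (hxy : x ≠ y) :
    ∀ {q : List α} {Q : List (List α)}, (q = [x, y] ∨ q = [y, x]) →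
      (∀ r ∈ Q, r = [x, y] ∨ r = [y, x]) → (IsChain (· ≠ ·) (q ++ Q.flatten) ↔ ∀ r ∈ Q, r = q)
  | q, [], hq, _ => by rcases hq with rfl | rfl <;> simp [hxy, hxy.symm]
  | q, r :: Q, hq, hQ => by
    rw [forall_mem_cons] at hQ
    have ih := isChain_ne_append_flatten_pairs hxy hQ.1 hQ.2
    rw [flatten_cons, forall_mem_cons]
    rcases hq with rfl | rfl <;> rcases hQ.1 with rfl | rfl <;>
      simp [hxy, hxy.symm] at ih ⊢ <;> exact ih

theorem isChain_ne_flatten_pairs {x y : α} (hxy : x ≠ y) {Q : List (List α)}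
    (hQ : ∀ r ∈ Q, r = [x, y] ∨ r = [y, x]) :
    IsChain (· ≠ ·) Q.flatten ↔ (∀ r ∈ Q, r = [x, y]) ∨ (∀ r ∈ Q, r = [y, x]) := by
  rcases Q with _ | ⟨q, Q⟩
  · simp
  rw [forall_mem_cons] at hQ
  rw [flatten_cons, isChain_ne_append_flatten_pairs hxy hQ.1 hQ.2]
  rcases hQ.1 with rfl | rfl <;> simp [hxy, hxy.symm]

variable [DecidableEq α]

theorem alternates_iff_isChain {W : List α} {x y : α} :
    Alternates W x y ↔ IsChain (· ≠ ·) (W.filter fun v => v = x ∨ v = y) :=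
  Iff.rfl

theorem isChain_ne_count_getLast {a b : α} (hab : a ≠ b) :
    ∀ {t : List α}, (∀ v ∈ a :: t, v = a ∨ v = b) → IsChain (· ≠ ·) (a :: t) →
      ((a :: t).count a = (a :: t).count b + 1 ∧ (a :: t).getLast (cons_ne_nil _ _) = a) ∨
      ((a :: t).count a = (a :: t).count b ∧ (a :: t).getLast (cons_ne_nil _ _) = b)
  | [], _, _ => by simp [hab]
  | c :: t, hmem, hchain => by
    rw [isChain_cons_cons] at hchain
    have hc : c = b := (hmem c (by simp)).resolve_left hchain.1.symm
    subst hc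
    have ih := isChain_ne_count_getLast hab.symm
      (fun v hv => (hmem v (mem_cons_of_mem _ hv)).symm) hchain.2
    simp only [count_cons, beq_iff_eq, hab, hab.symm, if_true, if_false, getLast_cons_cons] at ih ⊢
    rcases ih with ⟨hcount, hlast⟩ | ⟨hcount, hlast⟩
    · exact Or.inr ⟨by omega, hlast⟩
    · exact Or.inl ⟨by omega, hlast⟩

theorem head_ne_getLast_of_count_eq {x y : α} (hxy : x ≠ y) {l : List α}
    (hmem : ∀ v ∈ l, v = x ∨ v = y) (hcount : l.count x = l.count y)
    (hchain : IsChain (· ≠ ·) l) : ∀ a ∈ l.head?, ∀ b ∈ l.getLast?, a ≠ b := by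
  rcases l with _ | ⟨a, t⟩
  · simp
  simp only [head?_cons, Option.mem_some_iff, forall_eq',
    getLast?_eq_some_getLast (cons_ne_nil a t)]
  intro hlast
  rcases hmem a (by simp) with rfl | rfl
  · rcases isChain_ne_count_getLast hxy hmem hchain with h | h <;> grind
  · rcases isChain_ne_count_getLast hxy.symm (fun v hv => (hmem v hv).symm) hchain with h | h
      <;> grind

theorem List.IsChain.ne_append_comm {x y : α} (hxy : x ≠ y) {l₁ l₂ : List α}
    (hmem : ∀ v ∈ l₁ ++ l₂, v = x ∨ v = y) (hcount : (l₁ ++ l₂).count x = (l₁ ++ l₂).count y)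
    (hchain : IsChain (· ≠ ·) (l₁ ++ l₂)) : IsChain (· ≠ ·) (l₂ ++ l₁) := by
  obtain ⟨h₁, h₂, -⟩ := isChain_append.1 hchain
  refine h₂.append h₁ fun b hb a ha => ?_
  have hne := head_ne_getLast_of_count_eq hxy hmem hcount hchain
  have hl₁ : l₁ ≠ [] := by rintro rfl; simp at ha
  have hl₂ : l₂ ≠ [] := by rintro rfl; simp at hb
  exact (hne a (by simpa [head?_append, hl₁] using ha) b
    (by simpa [getLast?_append, hl₂] using hb)).symm

theorem Alternates.append_comm {W₁ W₂ : List α} {x y : α} (hxy : x ≠ y)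
    (hcount : (W₁ ++ W₂).count x = (W₁ ++ W₂).count y) (h : Alternates (W₁ ++ W₂) x y) :
    Alternates (W₂ ++ W₁) x y := by
  rw [alternates_iff_isChain, filter_append] at h ⊢
  refine h.ne_append_comm hxy (fun v hv => ?_) ?_
  · rw [← filter_append, mem_filter] at hv
    simpa using hv.2
  · simpa [← filter_append, count_filter] using hcount

theorem IsKUniform.append_comm {W₁ W₂ : List α} {n : ℕ} (h : IsKUniform (W₁ ++ W₂) n) :
    IsKUniform (W₂ ++ W₁) n := fun v => by
  rw [count_append, Nat.add_comm, ← count_append]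
  exact h v

theorem Represents.append_comm {W₁ W₂ : List α} {G : SimpleGraph α} {n : ℕ}
    (hW : IsKUniform (W₁ ++ W₂) n) (h : Represents (W₁ ++ W₂) G) : Represents (W₂ ++ W₁) G := by
  refine ⟨fun v => perm_append_comm.mem_iff.1 (h.1 v), fun x y hxy => (h.2 x y hxy).trans ⟨?_, ?_⟩⟩
  · exact Alternates.append_comm hxy (by rw [hW, hW])
  · exact Alternates.append_comm hxy (by rw [hW.append_comm, hW.append_comm])

theorem IsKUniform.mem {W : List α} {n : ℕ} (h : IsKUniform W n) (hn : n ≠ 0) (v : α) : v ∈ W :=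
  count_pos_iff.1 (Nat.pos_of_ne_zero (h v ▸ hn))

theorem isKUniform_one_of_nodup {l : List α} (hnodup : l.Nodup) (hmem : ∀ x, x ∈ l) :
    IsKUniform l 1 :=
  fun x => count_eq_one_of_mem hnodup (hmem x)

theorem IsKUniform.idxOf_injective {l : List α} {n : ℕ} (h : IsKUniform l n) (hn : n ≠ 0) :
    Function.Injective l.idxOf :=
  fun x _ hxy => (idxOf_inj (h.mem hn x)).1 hxy

theorem exists_cons_eq_flatten_ofFn (z : α) (t : List α) :
    ∃ (n : ℕ) (B : Fin n → List α), (∀ m, z ∉ B m) ∧ z :: t = (ofFn fun m => z :: B m).flatten := by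
  have key : ∀ t : List α, ∃ (u : List α) (vs : List (List α)),
      z ∉ u ∧ (∀ v ∈ vs, z ∉ v) ∧ t = u ++ (vs.map (z :: ·)).flatten := by
    intro t
    induction t with
    | nil => exact ⟨[], [], by simp, by simp, by simp⟩
    | cons a t ih =>
      obtain ⟨u, vs, hu, hvs, rfl⟩ := ih
      by_cases ha : a = z
      · subst ha
        exact ⟨[], u :: vs, by simp, forall_mem_cons.2 ⟨hu, hvs⟩, by simp⟩
      · exact ⟨a :: u, vs, by simp [hu, Ne.symm ha], hvs, by simp⟩
  obtain ⟨u, vs, hu, hvs, rfl⟩ := key t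
  refine ⟨(u :: vs).length, fun m => (u :: vs)[m], fun m => ?_, ?_⟩
  · exact (forall_mem_cons (p := fun v => z ∉ v)).2 ⟨hu, hvs⟩ _ (getElem_mem _)
  · change _ = (ofFn fun m : Fin (u :: vs).length => z :: (u :: vs)[(m : ℕ)]).flatten
    rw [ofFn_getElem_eq_map]
    simp

theorem count_flatten_ofFn_cons {n : ℕ} (B : Fin n → List α) (z x : α) :
    ((ofFn fun m => z :: B m).flatten).count x = ∑ m, ((z :: B m).count x) := by
  rw [count_flatten, map_ofFn, sum_ofFn]
  rfl

theorem filter_eq_replicate_of_not_mem {x : α} {l : List α} (hx : x ∉ l) (y : α) :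
    l.filter (fun v => v = x ∨ v = y) = replicate (l.count y) y := by
  rw [← filter_eq]
  exact filter_congr fun v hv => by simp [show v ≠ x from fun h => hx (h ▸ hv)]

theorem count_flatten_ofFn_cons_self {n : ℕ} {B : Fin n → List α} {z : α} (hz : ∀ m, z ∉ B m) :
    ((ofFn fun m => z :: B m).flatten).count z = n := by
  simp [count_flatten_ofFn_cons, count_eq_zero.2 (hz _)]

theorem count_eq_one_of_alternates {n : ℕ} {B : Fin n → List α} {z x : α} (hzx : z ≠ x)
    (hz : ∀ m, z ∉ B m) (hcount : ((ofFn fun m => z :: B m).flatten).count x = n)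
    (halt : Alternates (ofFn fun m => z :: B m).flatten z x) (m : Fin n) :
    (B m).count x = 1 := by
  have hle : ∀ m, (B m).count x ≤ 1 := by
    intro m
    have hchain : IsChain (· ≠ ·) ((z :: B m).filter fun v => v = z ∨ v = x) := by
      rw [alternates_iff_isChain, filter_flatten] at halt
      exact halt.infix (infix_of_mem_flatten (mem_map_of_mem (mem_ofFn.2 ⟨m, rfl⟩)))
    rw [filter_cons_of_pos (by simp), filter_eq_replicate_of_not_mem (hz m)] at hchain
    by_contra! h
    obtain ⟨c, hc⟩ := Nat.exists_eq_add_of_le h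
    rw [hc, show 1 + 1 + c = c + 1 + 1 by omega] at hchain
    simp [replicate_succ] at hchain
  have hsum : ∑ m, (B m).count x = ∑ _m : Fin n, 1 := by
    rw [count_flatten_ofFn_cons] at hcount
    simpa [count_cons, hzx] using hcount
  exact (Finset.sum_eq_sum_iff_of_le fun m _ => hle m).1 hsum m (Finset.mem_univ m)

theorem isKUniform_cons_of_alternates {n : ℕ} {B : Fin n → List α} {z : α} (hz : ∀ m, z ∉ B m)
    (hW : IsKUniform (ofFn fun m => z :: B m).flatten n)
    (halt : ∀ x, z ≠ x → Alternates (ofFn fun m => z :: B m).flatten z x) (m : Fin n) :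
    IsKUniform (z :: B m) 1 := by
  intro x
  rcases eq_or_ne z x with rfl | hzx
  · simp [count_eq_zero.2 (hz m)]
  · rw [count_cons_of_ne hzx]
    exact count_eq_one_of_alternates hzx hz (hW x) (halt x hzx) m

def Precedes (l : List α) (x y : α) : Prop :=
  l.idxOf x < l.idxOf y

theorem precedes_of_prefix {l₁ l : List α} {x y : α} (h : l₁ <+: l) (hx : x ∈ l₁) (hy : y ∉ l₁) :
    Precedes l x y := by
  obtain ⟨l₂, rfl⟩ := h
  rw [Precedes, idxOf_append_of_mem hx, idxOf_append_of_notMem hy]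
  exact (idxOf_lt_length_iff.2 hx).trans_le (Nat.le_add_right _ _)

theorem filter_eq_pair_of_count_eq_one {x y : α} (hxy : x ≠ y) :
    ∀ {l : List α}, l.count x = 1 → l.count y = 1 →
      l.filter (fun v => v = x ∨ v = y) = if l.idxOf x < l.idxOf y then [x, y] else [y, x]
  | [], hx, _ => by simp at hx
  | a :: t, hx, hy => by
    by_cases hax : a = x
    · subst hax
      have ht : a ∉ t := count_eq_zero.1 (by simpa using hx)
      rw [count_cons_of_ne hxy] at hy
      rw [filter_cons_of_pos (by simp), filter_eq_replicate_of_not_mem ht, hy, idxOf_cons_self,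
        idxOf_cons_ne _ hxy, if_pos (Nat.succ_pos _), replicate_one]
    by_cases hay : a = y
    · subst hay
      have ht : a ∉ t := count_eq_zero.1 (by simpa using hy)
      rw [count_cons_of_ne hxy.symm] at hx
      have hpair : t.filter (fun v => v = x ∨ v = a) = [x] := by
        rw [← replicate_one, ← hx, ← filter_eq_replicate_of_not_mem ht]
        exact filter_congr fun v _ => by simp [or_comm]
      rw [filter_cons_of_pos (by simp), hpair, idxOf_cons_self, idxOf_cons_ne _ hxy.symm,
        if_neg (Nat.not_lt_zero _)]
    rw [count_cons_of_ne hax] at hx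
    rw [count_cons_of_ne hay] at hy
    rw [filter_cons_of_neg (by simp [hax, hay]), filter_eq_pair_of_count_eq_one hxy hx hy,
      idxOf_cons_ne _ hax, idxOf_cons_ne _ hay]
    simp only [Nat.succ_lt_succ_iff]

theorem alternates_flatten_ofFn_iff {n : ℕ} {B : Fin n → List α} {x y : α} (hxy : x ≠ y)
    (hx : ∀ m, (B m).count x = 1) (hy : ∀ m, (B m).count y = 1) :
    Alternates (ofFn B).flatten x y ↔ SameOrder (fun m => (B m).idxOf) x y := by
  have hblock : ∀ m, ((B m).filter (fun v => v = x ∨ v = y) = [x, y] ↔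
      (B m).idxOf x < (B m).idxOf y) ∧ ((B m).filter (fun v => v = x ∨ v = y) = [y, x] ↔
      (B m).idxOf y < (B m).idxOf x) := by
    intro m
    have hne : (B m).idxOf x ≠ (B m).idxOf y :=
      fun h => hxy ((idxOf_inj (count_pos_iff.1 (by rw [hx m]; exact Nat.one_pos))).1 h)
    rw [filter_eq_pair_of_count_eq_one hxy (hx m) (hy m)]
    split_ifs with h <;> simp [h, hxy, hxy.symm] <;> omega
  rw [alternates_iff_isChain, filter_flatten, isChain_ne_flatten_pairs hxy]
  · simp only [forall_mem_map, forall_mem_ofFn_iff, SameOrder]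
    exact or_congr (forall_congr' fun m => (hblock m).1) (forall_congr' fun m => (hblock m).2)
  · simp only [forall_mem_map, forall_mem_ofFn_iff]
    intro m
    rw [filter_eq_pair_of_count_eq_one hxy (hx m) (hy m)]
    split_ifs <;> simp

end Words

section StandardExample

open Function Sum

variable {ι : Type*} [Fintype ι] {k : ℕ} {pos : ι → Fin k ⊕ Fin k → ℕ}

theorem le_card_of_forall_lt_inr (hinj : ∀ m, Injective (pos m))
    (hlt : ∀ i j, i ≠ j → ∀ m, pos m (inl i) < pos m (inr j))
    (hself : ∀ i, ¬ SameOrder pos (inl i) (inr i)) : k ≤ Fintype.card ι := by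
  choose f hf using fun i => exists_lt_of_not_sameOrder hinj inl_ne_inr (hself i)
  have hf_inj : Injective f := by
    -- otherwise the order `f i` contains the cycle `b_i < a_i < b_j < a_j < b_i`
    intro i j hij
    by_contra hne
    have hbj := hf j
    rw [← hij] at hbj
    have hai := hlt i j hne (f i)
    have haj := hlt j i (Ne.symm hne) (f i)
    have hbi := hf i
    omega
  simpa using Fintype.card_le_of_injective f hf_inj

omit [Fintype ι] in
theorem forall_lt_inr_or_forall_inr_lt (hab : ∀ i j, i ≠ j → SameOrder pos (inl i) (inr j))
    (hbb : ∀ i j, i ≠ j → ¬ SameOrder pos (inr i) (inr j)) (i : Fin k) :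
    (∀ j, i ≠ j → ∀ m, pos m (inl i) < pos m (inr j)) ∨
      (∀ j, i ≠ j → ∀ m, pos m (inr j) < pos m (inl i)) := by
  by_contra! h
  obtain ⟨⟨j, hij, m, hm⟩, ⟨l, hil, m', hm'⟩⟩ := h
  have hj : ∀ m, pos m (inr j) < pos m (inl i) :=
    (hab i j hij).resolve_left fun h => absurd (h m) (not_lt.2 hm)
  have hl : ∀ m, pos m (inl i) < pos m (inr l) :=
    (hab i l hil).resolve_right fun h => absurd (h m') (not_lt.2 hm')
  have hjl : j ≠ l := by
    rintro rfl
    exact lt_asymm (hj m) (hl m)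
  exact hbb j l hjl (Or.inl fun m => (hj m).trans (hl m))

theorem le_card_of_sameOrder_iff (hk : 2 ≤ k) (hinj : ∀ m, Injective (pos m))
    (hab : ∀ i j, SameOrder pos (inl i) (inr j) ↔ i ≠ j)
    (haa : ∀ i j, i ≠ j → ¬ SameOrder pos (inl i) (inl j))
    (hbb : ∀ i j, i ≠ j → ¬ SameOrder pos (inr i) (inr j)) : k ≤ Fintype.card ι := by
  have hself : ∀ i, ¬ SameOrder pos (inl i) (inr i) := fun i h => (hab i i).1 h rfl
  rcases (show k = 2 ∨ 3 ≤ k by omega) with rfl | hk3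
  · exact two_le_card_of_not_sameOrder hinj (by simp) (haa 0 1 (by decide))
  have htype := forall_lt_inr_or_forall_inr_lt (fun i j => (hab i j).2) hbb
  have hmixed : ∀ i i', (∀ j, i ≠ j → ∀ m, pos m (inl i) < pos m (inr j)) →
      (∀ j, i' ≠ j → ∀ m, pos m (inr j) < pos m (inl i')) → False := by
    intro i i' hi hi'
    obtain ⟨l, hl, hli'⟩ := (Finset.univ.erase i).exists_mem_ne
      (by rw [Finset.card_erase_of_mem (Finset.mem_univ _)]; simp; omega) i'
    have hlt : ∀ m, pos m (inl i) < pos m (inl i') := fun m =>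
      (hi l (Finset.ne_of_mem_erase hl).symm m).trans (hi' l hli'.symm m)
    rcases eq_or_ne i i' with rfl | hii'
    · obtain ⟨m, -⟩ := exists_lt_of_not_sameOrder hinj inl_ne_inr (hself i)
      exact lt_irrefl _ (hlt m)
    · exact haa i i' hii' (Or.inl hlt)
  by_cases hAbove : ∃ i', ∀ j, i' ≠ j → ∀ m, pos m (inr j) < pos m (inl i')
  · obtain ⟨i', hi'⟩ := hAbove
    -- exchange the roles of the `a`'s and the `b`'s
    exact le_card_of_forall_lt_inr (pos := fun m => pos m ∘ swap)
      (fun m => (hinj m).comp swap_leftInverse.injective)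
      (fun i j hij m => ((htype j).resolve_left fun hj => hmixed j i' hj hi') i hij.symm m)
      (fun i h => hself i h.symm)
  · exact le_card_of_forall_lt_inr hinj
      (fun i => (htype i).resolve_right fun hi => hAbove ⟨i, hi⟩) hself

end StandardExample

section UpperBound

open Sum

variable {k : ℕ}

def cocktailBlock (k : ℕ) (m : Fin k) : List (Option (Fin k ⊕ Fin k)) :=
  none :: ((finRange k).erase m).map (some ∘ inl) ++ [some (inr m)] ++ [some (inl m)] ++
    ((finRange k).erase m).map (some ∘ inr)

theorem isKUniform_cocktailBlock (m : Fin k) : IsKUniform (cocktailBlock k m) 1 := by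
  have hnodup := (nodup_finRange k).erase m
  refine isKUniform_one_of_nodup ?_ fun x => ?_
  · simp [cocktailBlock, nodup_append, hnodup.map (Option.some_injective _ |>.comp inl_injective),
      hnodup.map (Option.some_injective _ |>.comp inr_injective), (nodup_finRange k).mem_erase_iff]
  · rcases x with _ | i | i <;> simp [cocktailBlock, (nodup_finRange k).mem_erase_iff, em, em']

theorem isKUniform_cocktailWord : IsKUniform (ofFn (cocktailBlock k)).flatten k := fun x => by
  simp [count_flatten, sum_ofFn, fun m => isKUniform_cocktailBlock m x]

theorem precedes_cocktailBlock_none {m : Fin k} {x : Option (Fin k ⊕ Fin k)} (hx : x ≠ none) :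
    Precedes (cocktailBlock k m) none x :=
  precedes_of_prefix (l₁ := [none]) ⟨(cocktailBlock k m).tail, by simp [cocktailBlock]⟩ (by simp)
    (by simpa using hx)

theorem precedes_cocktailBlock_inl_inr {m i : Fin k} (hi : i ≠ m) (j : Fin k) :
    Precedes (cocktailBlock k m) (some (inl i)) (some (inr j)) :=
  precedes_of_prefix ((prefix_append _ _).trans ((prefix_append _ _).trans (prefix_append _ _)))
    (by simp [(nodup_finRange k).mem_erase_iff, hi]) (by simp)

theorem precedes_cocktailBlock_inl_inl {m i : Fin k} (hi : i ≠ m) :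
    Precedes (cocktailBlock k m) (some (inl i)) (some (inl m)) :=
  precedes_of_prefix ((prefix_append _ _).trans ((prefix_append _ _).trans (prefix_append _ _)))
    (by simp [(nodup_finRange k).mem_erase_iff, hi]) (by simp [(nodup_finRange k).mem_erase_iff])

theorem precedes_cocktailBlock_inr_inl (m : Fin k) :
    Precedes (cocktailBlock k m) (some (inr m)) (some (inl m)) :=
  precedes_of_prefix ((prefix_append _ _).trans (prefix_append _ _)) (by simp)
    (by simp [(nodup_finRange k).mem_erase_iff])

theorem precedes_cocktailBlock_inr_inr {m j : Fin k} (hj : j ≠ m) :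
    Precedes (cocktailBlock k m) (some (inr m)) (some (inr j)) :=
  precedes_of_prefix ((prefix_append _ _).trans (prefix_append _ _)) (by simp)
    (by simp [(nodup_finRange k).mem_erase_iff, hj])

theorem precedes_cocktailBlock_inl_inr_of_ne {i j : Fin k} (hij : i ≠ j) (m : Fin k) :
    Precedes (cocktailBlock k m) (some (inl i)) (some (inr j)) := by
  rcases eq_or_ne i m with rfl | hi
  · exact precedes_of_prefix (prefix_append _ _) (by simp)
      (by simp [(nodup_finRange k).mem_erase_iff, hij.symm])
  · exact precedes_cocktailBlock_inl_inr hi j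

theorem cocktailWord_represents (hk : 2 ≤ k) :
    Represents (ofFn (cocktailBlock k)).flatten (cocktailCone k) := by
  have : Nontrivial (Fin k) := Fin.nontrivial_iff_two_le.2 hk
  refine ⟨isKUniform_cocktailWord.mem (by omega), fun x y hxy => ?_⟩
  rw [alternates_flatten_ofFn_iff hxy (isKUniform_cocktailBlock · x) (isKUniform_cocktailBlock · y)]
  rcases x with _ | x <;> rcases y with _ | y
  · exact absurd rfl hxy
  · exact iff_of_true (by simp [cocktailCone])
      (Or.inl fun m => precedes_cocktailBlock_none (by simp))
  · exact iff_of_true (by simp [cocktailCone])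
      (Or.inr fun m => precedes_cocktailBlock_none (by simp))
  rcases x with i | i <;> rcases y with j | j
  · have hij : i ≠ j := by simpa using hxy
    exact iff_of_false (by simp [cocktailCone]) (not_sameOrder_of_lt_of_lt (m := j) (m' := i)
      (precedes_cocktailBlock_inl_inl hij) (precedes_cocktailBlock_inl_inl hij.symm))
  · rcases eq_or_ne i j with rfl | hij
    · obtain ⟨m, hm⟩ := exists_ne i
      exact iff_of_false (by simp [cocktailCone]) (not_sameOrder_of_lt_of_lt (m := m) (m' := i)
        (precedes_cocktailBlock_inl_inr hm.symm i) (precedes_cocktailBlock_inr_inl i))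
    · exact iff_of_true (by simp [cocktailCone, hij])
        (Or.inl fun m => precedes_cocktailBlock_inl_inr_of_ne hij m)
  · rcases eq_or_ne i j with rfl | hij
    · obtain ⟨m, hm⟩ := exists_ne i
      exact iff_of_false (by simp [cocktailCone]) (not_sameOrder_of_lt_of_lt (m := i) (m' := m)
        (precedes_cocktailBlock_inr_inl i) (precedes_cocktailBlock_inl_inr hm.symm i))
    · exact iff_of_true (by simp [cocktailCone, hij.symm])
        (Or.inr fun m => precedes_cocktailBlock_inl_inr_of_ne hij.symm m)
  · have hij : i ≠ j := by simpa using hxy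
    exact iff_of_false (by simp [cocktailCone]) (not_sameOrder_of_lt_of_lt (m := i) (m' := j)
      (precedes_cocktailBlock_inr_inr hij.symm) (precedes_cocktailBlock_inr_inr hij))

theorem cocktailCone_kRepresentable (hk : 2 ≤ k) : KRepresentable (cocktailCone k) k :=
  ⟨_, isKUniform_cocktailWord, cocktailWord_represents hk⟩

end UpperBound

section LowerBound

open Function Sum

variable {k : ℕ}

theorem le_card_of_cocktailCone_adj_iff {ι : Type*} [Fintype ι] (hk : 2 ≤ k)
    {pos : ι → Option (Fin k ⊕ Fin k) → ℕ} (hinj : ∀ m, Injective (pos m))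
    (hadj : ∀ x y : Fin k ⊕ Fin k, x ≠ y →
      ((cocktailCone k).Adj (some x) (some y) ↔ SameOrder pos (some x) (some y))) :
    k ≤ Fintype.card ι :=
  le_card_of_sameOrder_iff (pos := fun m x => pos m (some x)) hk
    (fun m => (hinj m).comp (Option.some_injective _))
    (fun i j => (hadj _ _ inl_ne_inr).symm.trans (by simp [cocktailCone]))
    (fun i j hij h => by simpa [cocktailCone] using (hadj _ _ (by simpa using hij)).2 h)
    (fun i j hij h => by simpa [cocktailCone] using (hadj _ _ (by simpa using hij)).2 h)

theorem not_cocktailCone_kRepresentable_pred (hk : 2 ≤ k) :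
    ¬ KRepresentable (cocktailCone k) (k - 1) := by
  rintro ⟨W, hunif, hrep⟩
  obtain ⟨p, s, rfl⟩ := append_of_mem (hrep.1 none)
  obtain ⟨n, B, hB, hW⟩ := exists_cons_eq_flatten_ofFn none (s ++ p)
  have hrep' := hrep.append_comm hunif
  have hunif' := hunif.append_comm
  rw [cons_append, hW] at hrep' hunif'
  have hn : n = k - 1 := by
    rw [← hunif' none, count_flatten_ofFn_cons_self hB]
  subst hn
  have hblock := isKUniform_cons_of_alternates hB hunif'
    fun x hx => (hrep'.2 _ _ hx).1 (by cases x <;> simp_all [cocktailCone])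
  have hadj := fun (x y : Fin k ⊕ Fin k) (hxy : x ≠ y) =>
    (hrep'.2 (some x) (some y) (by simpa using hxy)).trans
      (alternates_flatten_ofFn_iff (by simpa using hxy) (hblock · _) (hblock · _))
  have hcard := le_card_of_cocktailCone_adj_iff hk
    (fun m => (hblock m).idxOf_injective one_ne_zero) hadj
  simp only [Fintype.card_fin] at hcard
  omega

end LowerBound

/-- For `k ≥ 2`, the graph `G_k` (cocktail party graph `H_{k,k}` plus an all-adjacent
vertex) has representation number exactly `k`: it is `k`-representable but not
`(k-1)`-representable. -/
theorem stmt12 (k : ℕ) (hk : 2 ≤ k) :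
    KRepresentable (cocktailCone k) k ∧ ¬ KRepresentable (cocktailCone k) (k - 1) :=
  ⟨cocktailCone_kRepresentable hk, not_cocktailCone_kRepresentable_pred hk⟩
end

section
/- A graph is 2-representable if and only if it is a circle graph. -/
/-- `G` is a circle graph: its vertices can be realized as chords of a circle (given by
pairs of endpoints `a v < b v` with all `2|V|` endpoints distinct, after cutting the
circle open into a line) so that two vertices are adjacent iff their chords cross,
i.e. their endpoints interleave. -/
def IsCircleGraph {V : Type*} (G : SimpleGraph V) : Prop :=
  ∃ a b : V → ℝ, (∀ v, a v < b v) ∧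
    Function.Injective (fun p : V × Bool => if p.2 then a p.1 else b p.1) ∧
    ∀ u v : V, u ≠ v →
      (G.Adj u v ↔
        (a u < a v ∧ a v < b u ∧ b u < b v) ∨ (a v < a u ∧ a u < b v ∧ b v < b u))

/-! A 2-uniform word and a chord diagram cut open into a line are both encoded by a list `E` of
pairs (position, letter), sorted strictly by position, in which every letter `v` occurs exactly
at two positions `a v < b v`: for a word take the indices of its letters, for chords sort their
endpoints. Two letters alternate in the word `E.map Prod.snd` exactly when their chords cross,
because restricted to these two letters `E` is a sorted list of four points, and among the
orders of `p₁ < p₂` and `q₁ < q₂` only the two interleaved ones spell `xyxy` or `yxyx`. -/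

namespace List

variable {α V : Type*} [LinearOrder α]

theorem eq_of_pairwise_fst_lt_of_mem_iff {L M : List (α × V)} (hL : L.Pairwise (·.1 < ·.1))
    (hM : M.Pairwise (·.1 < ·.1)) (h : ∀ e, e ∈ L ↔ e ∈ M) : L = M :=
  haveI : Std.Irrefl (fun e e' : α × V => e.1 < e'.1) := ⟨fun e => lt_irrefl e.1⟩
  hL.eq_of_mem_iff hM h

theorem isChain_ne_map_snd_iff_of_lt {x y : V} (hxy : x ≠ y) {p₁ p₂ q₁ q₂ : α}
    (hp : p₁ < p₂) (hq : q₁ < q₂) (h₁₁ : p₁ < q₁) (h₂₁ : p₂ ≠ q₁) (h₂₂ : p₂ ≠ q₂)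
    {L : List (α × V)} (hL : L.Pairwise (·.1 < ·.1))
    (hmem : ∀ e, e ∈ L ↔ e ∈ [(p₁, x), (p₂, x), (q₁, y), (q₂, y)]) :
    (L.map Prod.snd).IsChain (· ≠ ·) ↔
      (p₁ < q₁ ∧ q₁ < p₂ ∧ p₂ < q₂) ∨ (q₁ < p₁ ∧ p₁ < q₂ ∧ q₂ < p₂) := by
  have hL_eq : ∀ M : List (α × V), M.Pairwise (·.1 < ·.1) →
      (∀ e, e ∈ M ↔ e ∈ [(p₁, x), (p₂, x), (q₁, y), (q₂, y)]) → L = M :=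
    fun M hM hMmem =>
      eq_of_pairwise_fst_lt_of_mem_iff hL hM fun e => (hmem e).trans (hMmem e).symm
  -- The position of `p₂` relative to `q₁ < q₂` spells `xxyy`, `xyxy` or `xyyx`.
  rcases h₂₁.lt_or_gt with h₂₁ | h₂₁
  · rw [hL_eq _ (by grind [pairwise_cons]) fun _ => Iff.rfl]
    simp only [map_cons, map_nil]
    grind
  rcases h₂₂.lt_or_gt with h₂₂ | h₂₂
  · rw [hL_eq [(p₁, x), (q₁, y), (p₂, x), (q₂, y)] (by grind [pairwise_cons]) (by grind)]
    simp only [map_cons, map_nil]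
    grind
  · rw [hL_eq [(p₁, x), (q₁, y), (q₂, y), (p₂, x)] (by grind [pairwise_cons]) (by grind)]
    simp only [map_cons, map_nil]
    grind

theorem isChain_ne_map_snd_iff {x y : V} (hxy : x ≠ y) {p₁ p₂ q₁ q₂ : α}
    (hp : p₁ < p₂) (hq : q₁ < q₂)
    (h₁₁ : p₁ ≠ q₁) (h₁₂ : p₁ ≠ q₂) (h₂₁ : p₂ ≠ q₁) (h₂₂ : p₂ ≠ q₂)
    {L : List (α × V)} (hL : L.Pairwise (·.1 < ·.1))
    (hmem : ∀ e, e ∈ L ↔ e ∈ [(p₁, x), (p₂, x), (q₁, y), (q₂, y)]) :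
    (L.map Prod.snd).IsChain (· ≠ ·) ↔
      (p₁ < q₁ ∧ q₁ < p₂ ∧ p₂ < q₂) ∨ (q₁ < p₁ ∧ p₁ < q₂ ∧ q₂ < p₂) := by
  rcases h₁₁.lt_or_gt with h₁₁ | h₁₁
  · exact isChain_ne_map_snd_iff_of_lt hxy hp hq h₁₁ h₂₁ h₂₂ hL hmem
  · rw [or_comm]
    exact isChain_ne_map_snd_iff_of_lt hxy.symm hq hp h₁₁ h₁₂.symm h₂₂.symm hL
      (fun e => (hmem e).trans (by grind))

theorem exists_lt_and_get_eq_iff_of_count_eq_two [DecidableEq V] {W : List V} {v : V}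
    (h : W.count v = 2) : ∃ i j : Fin W.length, i < j ∧ ∀ k, W.get k = v ↔ k = i ∨ k = j := by
  have hlen : ((finRange W.length).filter (W.get · = v)).length = 2 := by
    conv_rhs => rw [← h, ← map_get_finRange W]
    rw [count_eq_countP, countP_map, countP_eq_length_filter]
    rfl
  obtain ⟨i, j, hij⟩ := length_eq_two.1 hlen
  have hsorted := (pairwise_lt_finRange W.length).sublist (filter_sublist (p := (W.get · = v)))
  rw [hij, pairwise_pair] at hsorted
  exact ⟨i, j, hsorted, fun k => by simpa using congrArg (k ∈ ·) hij⟩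

end List

open List

section Endpoints

variable {α V : Type*} [LinearOrder α]

def IsSortedEndpoints (E : List (α × V)) (a b : V → α) : Prop :=
  E.Pairwise (·.1 < ·.1) ∧ ∀ e, e ∈ E ↔ ∃ v, e = (a v, v) ∨ e = (b v, v)

namespace IsSortedEndpoints

variable {E : List (α × V)} {a b : V → α}

theorem left_mem (hE : IsSortedEndpoints E a b) (v : V) : (a v, v) ∈ E :=
  (hE.2 _).2 ⟨v, Or.inl rfl⟩

theorem right_mem (hE : IsSortedEndpoints E a b) (v : V) : (b v, v) ∈ E :=
  (hE.2 _).2 ⟨v, Or.inr rfl⟩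

theorem eq_of_fst_eq (hE : IsSortedEndpoints E a b) {e e' : α × V} (he : e ∈ E) (he' : e' ∈ E)
    (h : e.1 = e'.1) : e = e' :=
  inj_on_of_nodup_map (pairwise_map.2 (hE.1.imp ne_of_lt)) he he' h

theorem injective (hE : IsSortedEndpoints E a b) (hab : ∀ v, a v ≠ b v) :
    Function.Injective (fun p : V × Bool => if p.2 then a p.1 else b p.1) := by
  have mem : ∀ p : V × Bool, ((if p.2 then a p.1 else b p.1), p.1) ∈ E := by
    rintro ⟨v, _ | _⟩
    exacts [hE.right_mem v, hE.left_mem v]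
  rintro ⟨u, s⟩ ⟨v, t⟩ h
  obtain rfl : u = v := congrArg Prod.snd (hE.eq_of_fst_eq (mem (u, s)) (mem (v, t)) h)
  cases s <;> cases t
  exacts [rfl, absurd h.symm (hab u), absurd h (hab u), rfl]

theorem fst_ne (hE : IsSortedEndpoints E a b) {u v : V} (huv : u ≠ v) {s t : α}
    (hs : (s, u) ∈ E) (ht : (t, v) ∈ E) : s ≠ t := fun h =>
  huv (congrArg Prod.snd (hE.eq_of_fst_eq hs ht h))

variable [DecidableEq V]

theorem count_map_snd (hE : IsSortedEndpoints E a b) {v : V} (hv : a v < b v) :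
    (E.map Prod.snd).count v = 2 := by
  have : E.filter (·.2 == v) = [(a v, v), (b v, v)] :=
    eq_of_pairwise_fst_lt_of_mem_iff (hE.1.sublist filter_sublist) (by simpa using hv)
      (by grind [hE.2])
  rw [count_eq_length_filter, filter_map, length_map]
  exact congrArg length this

theorem alternates_map_snd_iff (hE : IsSortedEndpoints E a b) (hab : ∀ v, a v < b v)
    {u v : V} (huv : u ≠ v) :
    Alternates (E.map Prod.snd) u v ↔
      (a u < a v ∧ a v < b u ∧ b u < b v) ∨ (a v < a u ∧ a u < b v ∧ b v < b u) := by
  rw [Alternates, filter_map]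
  refine isChain_ne_map_snd_iff huv (hab u) (hab v)
    (hE.fst_ne huv (hE.left_mem u) (hE.left_mem v)) (hE.fst_ne huv (hE.left_mem u) (hE.right_mem v))
    (hE.fst_ne huv (hE.right_mem u) (hE.left_mem v)) (hE.fst_ne huv (hE.right_mem u) (hE.right_mem v))
    (hE.1.sublist filter_sublist) fun e => ?_
  grind [hE.2]

end IsSortedEndpoints

theorem exists_isSortedEndpoints_of_count_eq_two [DecidableEq V] {W : List V}
    (h : ∀ v, W.count v = 2) :
    ∃ a b : V → ℝ, (∀ v, a v < b v) ∧ ∃ E, IsSortedEndpoints E a b ∧ E.map Prod.snd = W := by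
  choose i j hij hget using fun v => exists_lt_and_get_eq_iff_of_count_eq_two (h v)
  refine ⟨fun v => ((i v : ℕ) : ℝ), fun v => ((j v : ℕ) : ℝ), fun v => Nat.cast_lt.2 (hij v),
    (finRange W.length).map fun k : Fin W.length => (((k : ℕ) : ℝ), W.get k), ⟨?_, fun e => ?_⟩, ?_⟩
  · rw [pairwise_map]
    exact (pairwise_lt_finRange _).imp fun hkl => Nat.cast_lt.2 hkl
  · simp only [mem_map, mem_finRange, true_and]
    constructor
    · rintro ⟨k, rfl⟩
      refine ⟨W.get k, ?_⟩
      rcases (hget _ k).1 rfl with hk | hk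
      exacts [Or.inl (by rw [← hk]), Or.inr (by rw [← hk])]
    · rintro ⟨v, rfl | rfl⟩
      exacts [⟨i v, by rw [(hget v _).2 (Or.inl rfl)]⟩, ⟨j v, by rw [(hget v _).2 (Or.inr rfl)]⟩]
  · rw [map_map]
    exact map_get_finRange W

theorem exists_isSortedEndpoints [Fintype V] {a b : V → α}
    (hinj : Function.Injective (fun p : V × Bool => if p.2 then a p.1 else b p.1)) :
    ∃ E : List (α × V), IsSortedEndpoints E a b := by
  set E₀ := (Finset.univ : Finset (V × Bool)).toList.map
    fun p => ((if p.2 then a p.1 else b p.1), p.1)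
  set le : α × V → α × V → Bool := fun e e' => decide (e.1 ≤ e'.1)
  have hperm := mergeSort_perm E₀ le
  refine ⟨E₀.mergeSort le, ?_, fun e => ?_⟩
  · have hle := pairwise_mergeSort (le := le)
      (fun _ _ _ h h' => by simp only [le, decide_eq_true_eq] at *; exact h.trans h')
      (fun e e' => by simpa [le] using le_total e.1 e'.1) E₀
    have hne : (E₀.map Prod.fst).Nodup := by
      rw [map_map]
      exact (Finset.nodup_toList _).map hinj
    rw [← (hperm.map Prod.fst).nodup_iff, Nodup, pairwise_map] at hne
    exact (hle.and hne).imp fun h => lt_of_le_of_ne (by simpa [le] using h.1) h.2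
  · rw [hperm.mem_iff]
    simp only [E₀, mem_map, Finset.mem_toList, Finset.mem_univ, true_and, Prod.exists,
      Bool.exists_bool, Bool.false_eq_true, if_false, if_true]
    grind

end Endpoints

/-- A graph is 2-representable if and only if it is a circle graph. -/
theorem stmt13 {V : Type*} [Fintype V] [DecidableEq V] (G : SimpleGraph V) :
    KRepresentable G 2 ↔ IsCircleGraph G := by
  constructor
  · rintro ⟨W, huni, -, hadj⟩
    obtain ⟨a, b, hab, E, hE, rfl⟩ := exists_isSortedEndpoints_of_count_eq_two huni
    exact ⟨a, b, hab, hE.injective fun v => (hab v).ne,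
      fun u v huv => (hadj u v huv).trans (hE.alternates_map_snd_iff hab huv)⟩
  · rintro ⟨a, b, hab, hinj, hadj⟩
    obtain ⟨E, hE⟩ := exists_isSortedEndpoints hinj
    exact ⟨E.map Prod.snd, fun v => hE.count_map_snd (hab v),
      fun v => mem_map.2 ⟨_, hE.left_mem v, rfl⟩,
      fun u v huv => (hadj u v huv).trans (hE.alternates_map_snd_iff hab huv).symm⟩
end

section
/- If a graph G has girth strictly greater than its chromatic number, then G admits a semi-transitive orientation and is therefore representable. -/
/-!
Orient every edge of `G` towards the larger colour of a proper colouring with `χ(G)` colours. The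
colours strictly increase along a directed path `v₀ → ⋯ → vₜ`, so `t < χ(G)`; an arc `v₀ → vₜ`
with `t ≥ 2` would then close a cycle of length `t + 1 ≤ χ(G) < girth G`. Hence there is no
shortcut, and the orientation is semi-transitive.

A semi-transitive orientation of a finite graph is turned into a representing word as follows.
Draw each vertex `z` as a chord `[N z, N z + M]` of a line and read off the chord ends from left to
right: since all chords have the same length, two letters alternate in this word iff their chords
overlap. If `N` increases by less than `M` along every arc, adjacent vertices alternate. For each
non-adjacent pair `x, y` we pick such an `N` for which the chords of `x` and `y` are disjoint if
`x ⇝ y`, and for which `x` comes before `y` if they are incomparable; concatenating the words for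
`(x, y)` and `(y, x)` then contains `x x` or `y y`. The concatenation over all pairs represents `G`.
-/

open Relation

theorem List.filter_map_snd_mergeSort {α : Type*} (l E : List (ℕ × α)) (p : α → Bool)
    (hperm : (l.filter (p ∘ Prod.snd)).Perm E) (hE : E.Pairwise (·.1 < ·.1)) :
    ((l.mergeSort (·.1 ≤ ·.1)).map Prod.snd).filter p = E.map Prod.snd := by
  rw [List.filter_map]
  congr 1
  have hsorted : (l.mergeSort (·.1 ≤ ·.1)).Pairwise (·.1 ≤ ·.1) := by
    simpa using List.pairwise_mergeSort (le := fun a b : ℕ × α => decide (a.1 ≤ b.1))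
      (fun a b c hab hbc => by simp only [decide_eq_true_eq] at *; omega)
      (fun a b => by simpa using Nat.le_total a.1 b.1) l
  have hkeys : (E.map Prod.fst).Nodup := List.pairwise_map.mpr (hE.imp Nat.ne_of_lt)
  have hperm' := ((List.mergeSort_perm l (·.1 ≤ ·.1)).filter (p ∘ Prod.snd)).trans hperm
  refine hperm'.eq_of_pairwise (le := (·.1 ≤ ·.1)) (fun a b ha hb hab hba => ?_)
    (hsorted.sublist List.filter_sublist) (hE.imp Nat.le_of_lt)
  exact List.inj_on_of_nodup_map hkeys (hperm'.subset ha) hb (le_antisymm hab hba)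

theorem List.isChain_flatten_of_forall_eq {α : Type*} {R : α → α → Prop} {l : List α}
    {L : List (List α)} (hl : l ≠ []) (hchain : l.IsChain R) (hwrap : R (l.getLast hl) (l.head hl))
    (hL : ∀ m ∈ L, m = l) : L.flatten.IsChain R := by
  rw [List.eq_replicate_iff.mpr ⟨rfl, hL⟩, List.isChain_flatten (by simp [hl.symm])]
  refine ⟨by simp [hchain], List.isChain_replicate_of_rel _ ?_⟩
  simpa [List.getLast?_eq_some_getLast hl, List.head?_eq_some_head hl] using hwrap

theorem List.filter_eq_or_eq_comm {α : Type*} [DecidableEq α] (l : List α) (x y : α) :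
    l.filter (fun z => z = y ∨ z = x) = l.filter (fun z => z = x ∨ z = y) := by
  simp only [or_comm]

section ChordWord

variable {V : Type*} [Fintype V]

noncomputable def chordEvents (N : V → ℕ) (M : ℕ) : List (ℕ × V) :=
  (Finset.univ : Finset V).toList.flatMap fun v => [(N v, v), (N v + M, v)]

/-- Vertex `v` is the chord `[N v, N v + M]`; the word lists the chord ends from left to right. -/
noncomputable def chordWord (N : V → ℕ) (M : ℕ) : List V :=
  ((chordEvents N M).mergeSort (·.1 ≤ ·.1)).map Prod.snd

theorem mem_chordWord (N : V → ℕ) (M : ℕ) (v : V) : v ∈ chordWord N M := by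
  simp only [chordWord, chordEvents, List.mem_map, List.mem_mergeSort, List.mem_flatMap]
  exact ⟨(N v, v), ⟨v, by simp⟩, rfl⟩

theorem chordEvents_filter_perm [DecidableEq V] (N : V → ℕ) (M : ℕ) {x y : V} (hxy : x ≠ y) :
    ((chordEvents N M).filter ((fun z => decide (z = x ∨ z = y)) ∘ Prod.snd)).Perm
      [(N x, x), (N x + M, x), (N y, y), (N y + M, y)] := by
  set p : V → Bool := fun z => decide (z = x ∨ z = y)
  have hfilter : ∀ l : List V,
      (l.flatMap fun v => [(N v, v), (N v + M, v)]).filter (p ∘ Prod.snd) =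
        (l.filter p).flatMap fun v => [(N v, v), (N v + M, v)] := by
    intro l
    induction l with
    | nil => rfl
    | cons v l ih => by_cases hv : p v <;> simp [hv, ih]
  have huniv : ((Finset.univ : Finset V).toList.filter p).Perm [x, y] := by
    rw [List.perm_ext_iff_of_nodup ((Finset.nodup_toList _).filter _) (by simp [hxy])]
    simp [p]
  rw [chordEvents, hfilter]
  exact huniv.flatMap_right _

theorem chordWord_filter_of_lt_of_lt [DecidableEq V] {N : V → ℕ} {M : ℕ} {x y : V} (hxy : x ≠ y)
    (hxy₁ : N x < N y) (hxy₂ : N y < N x + M) :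
    (chordWord N M).filter (fun z => z = x ∨ z = y) = [x, y, x, y] :=
  List.filter_map_snd_mergeSort _ [(N x, x), (N y, y), (N x + M, x), (N y + M, y)] _
    ((chordEvents_filter_perm N M hxy).trans (.cons _ (.swap _ _ _))) (by grind)

theorem chordWord_filter_of_add_lt [DecidableEq V] {N : V → ℕ} {M : ℕ} {x y : V} (hxy : x ≠ y)
    (hM : 0 < M) (hxy' : N x + M < N y) :
    (chordWord N M).filter (fun z => z = x ∨ z = y) = [x, x, y, y] :=
  List.filter_map_snd_mergeSort _ [(N x, x), (N x + M, x), (N y, y), (N y + M, y)] _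
    (chordEvents_filter_perm N M hxy) (by grind)

end ChordWord

section SemiTransitive

variable {V : Type*} {D : V → V → Prop}

theorem DigraphAcyclic.ne_of_transGen (hD : DigraphAcyclic D) {u v : V} (h : TransGen D u v) :
    u ≠ v := by
  rintro rfl
  exact hD u h

theorem transGen_of_path {v : ℕ → V} {t : ℕ} (hv : ∀ i < t, D (v i) (v (i + 1))) {i j : ℕ}
    (hij : i < j) (hjt : j ≤ t) : TransGen D (v i) (v j) := by
  induction j, hij using Nat.le_induction with
  | base => exact .single (hv i (by omega))
  | succ j _ ih => exact (ih (by omega)).tail (hv j (by omega))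

theorem exists_path_extension {v : ℕ → V} {t : ℕ} (hv : ∀ i < t, D (v i) (v (i + 1))) {b : V}
    (h : ReflTransGen D (v t) b) :
    ∃ (t' : ℕ) (v' : ℕ → V), t ≤ t' ∧ (∀ i ≤ t, v' i = v i) ∧ v' t' = b ∧
      ∀ i < t', D (v' i) (v' (i + 1)) := by
  induction h with
  | refl => exact ⟨t, v, le_rfl, fun _ _ => rfl, rfl, hv⟩
  | @tail b c _ hbc ih =>
    obtain ⟨t', v', htt', hagree, hend, harcs⟩ := ih
    refine ⟨t' + 1, Function.update v' (t' + 1) c, by omega, fun i hi => ?_, by simp,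
      fun i hi => ?_⟩
    · rw [Function.update_of_ne (by omega), hagree i hi]
    · rw [Function.update_of_ne (by omega)]
      rcases Nat.lt_or_eq_of_le (Nat.le_of_lt_succ hi) with hi | rfl
      · rw [Function.update_of_ne (by omega)]
        exact harcs i hi
      · rw [Function.update_self, hend]
        exact hbc

theorem SemiTransitive.arc_of_path (hD : SemiTransitive D) {v : ℕ → V} {t : ℕ}
    (hv : ∀ i < t, D (v i) (v (i + 1))) (h0t : D (v 0) (v t)) {i j : ℕ} (hij : i < j)
    (hjt : j ≤ t) : D (v i) (v j) := by
  by_contra hmissing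
  by_cases ht : 3 ≤ t
  · refine hD.2 ⟨t, v, ht, fun i j hi hj hne => ?_, hv, h0t, i, j, hij, hjt, hmissing⟩
    rcases Nat.lt_or_gt_of_ne hne with hlt | hlt
    · exact hD.1.ne_of_transGen (transGen_of_path hv hlt hj)
    · exact (hD.1.ne_of_transGen (transGen_of_path hv hlt hi)).symm
  · rcases (by omega : j = i + 1 ∨ (i = 0 ∧ j = t)) with rfl | ⟨rfl, rfl⟩
    · exact hmissing (hv i (by omega))
    · exact hmissing h0t

theorem SemiTransitive.arc_of_reflTransGen_of_transGen (hD : SemiTransitive D) {a b x y : V}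
    (hab : D a b) (hax : ReflTransGen D a x) (hxy : TransGen D x y) (hyb : ReflTransGen D y b) :
    D x y := by
  obtain ⟨s, u, -, hu0, hus, hu⟩ :=
    exists_path_extension (v := fun _ => a) (t := 0) (by simp) hax
  obtain ⟨j, w, hsj, hwu, hwj, hw⟩ := exists_path_extension hu (hus ▸ hxy.to_reflTransGen)
  obtain ⟨t, v, hjt, hvw, hvt, hv⟩ := exists_path_extension hw (hwj ▸ hyb)
  have hvs : v s = x := by rw [hvw s hsj, hwu s le_rfl, hus]
  have hvj : v j = y := by rw [hvw j le_rfl, hwj]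
  have hv0 : v 0 = a := by rw [hvw 0 (by omega), hwu 0 (by omega), hu0 0 le_rfl]
  have hsj' : s < j := lt_of_le_of_ne hsj fun h => hD.1.ne_of_transGen hxy (by rw [← hvs, h, hvj])
  have := hD.arc_of_path hv (by rwa [hv0, hvt]) hsj' hjt
  rwa [hvs, hvj] at this

end SemiTransitive

section Potential

variable {V : Type*} {D : V → V → Prop}

noncomputable def numAncestors (D : V → V → Prop) (v : V) : ℕ :=
  {u | TransGen D u v}.ncard

theorem numAncestors_lt_of_transGen [Finite V] (hD : DigraphAcyclic D) {a b : V}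
    (hab : TransGen D a b) : numAncestors D a < numAncestors D b :=
  Set.ncard_lt_ncard ⟨fun _ hu => hu.trans hab, fun hsub => hD a (hsub hab)⟩

theorem numAncestors_lt_card [Finite V] (hD : DigraphAcyclic D) (v : V) :
    numAncestors D v < Nat.card V :=
  Set.ncard_lt_card fun huniv => hD v (huniv ▸ Set.mem_univ v : v ∈ {u | TransGen D u v})

open Classical in
/-- Along an arc each indicator term can only switch on, and by semi-transitivity not both do, so
the potential grows by less than `2 * Nat.card V`; when `x ⇝ y` are non-adjacent, both switch on
between `x` and `y`. -/
noncomputable def pairPotential (D : V → V → Prop) (x y z : V) : ℕ :=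
  numAncestors D z +
    (if TransGen D x y ∧ ¬ D x y ∧ ¬ ReflTransGen D z x then Nat.card V else 0) +
    (if ReflTransGen D y z then Nat.card V else 0)

variable [Finite V]

theorem pairPotential_lt_of_arc (hD : SemiTransitive D) (x y : V) {a b : V} (hab : D a b) :
    pairPotential D x y a < pairPotential D x y b ∧
      pairPotential D x y b < pairPotential D x y a + 2 * Nat.card V := by
  have hrank := numAncestors_lt_of_transGen hD.1 (.single hab)
  have hb := numAncestors_lt_card hD.1 b
  have hmono₁ : ReflTransGen D b x → ReflTransGen D a x := .head hab
  have hmono₂ : ReflTransGen D y a → ReflTransGen D y b := (.tail · hab)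
  have hnot_both : ReflTransGen D a x → TransGen D x y → ¬ D x y → ReflTransGen D y b → False :=
    fun hax hxy hn hyb => hn (hD.arc_of_reflTransGen_of_transGen hab hax hxy hyb)
  unfold pairPotential
  split_ifs <;> first | omega | tauto

theorem pairPotential_add_lt_of_transGen (hD : DigraphAcyclic D) {x y : V}
    (hxy : TransGen D x y) (hn : ¬ D x y) :
    pairPotential D x y x + 2 * Nat.card V < pairPotential D x y y := by
  have hyx : ¬ ReflTransGen D y x := fun hyx => hD x (hxy.trans_left hyx)
  have := numAncestors_lt_of_transGen hD hxy
  simp only [pairPotential, hxy, hn, hyx, ReflTransGen.refl, not_true_eq_false, not_false_eq_true,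
    and_false, and_self, ↓reduceIte, add_zero]
  omega

theorem pairPotential_lt_of_incomparable (hD : DigraphAcyclic D) {x y : V} (hne : x ≠ y)
    (hxy : ¬ TransGen D x y) (hyx : ¬ TransGen D y x) :
    pairPotential D x y x < pairPotential D x y y ∧
      pairPotential D x y y < pairPotential D x y x + 2 * Nat.card V := by
  have hyx' : ¬ ReflTransGen D y x := fun h =>
    (reflTransGen_iff_eq_or_transGen.mp h).elim hne hyx
  have := numAncestors_lt_card hD x
  have := numAncestors_lt_card hD y
  simp only [pairPotential, hxy, hyx', ReflTransGen.refl, not_true_eq_false, not_false_eq_true,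
    and_false, false_and, ↓reduceIte, add_zero]
  omega

end Potential

section RepresentingWord

variable {V : Type*} [Fintype V] {D : V → V → Prop}

noncomputable def pieceWord (D : V → V → Prop) (x y : V) : List V :=
  chordWord (pairPotential D x y) (2 * Nat.card V)

noncomputable def representingWord (D : V → V → Prop) : List V :=
  (Finset.univ : Finset (V × V)).toList.flatMap fun q => pieceWord D q.1 q.2 ++ pieceWord D q.2 q.1

theorem mem_representingWord (D : V → V → Prop) (v : V) : v ∈ representingWord D :=
  List.mem_flatMap.mpr ⟨(v, v), by simp, List.mem_append_left _ (mem_chordWord _ _ v)⟩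

theorem infix_representingWord (D : V → V → Prop) (x y : V) :
    pieceWord D x y ++ pieceWord D y x <:+: representingWord D := by
  rw [representingWord, List.flatMap_def]
  exact List.infix_of_mem_flatten
    (List.mem_map_of_mem (Finset.mem_toList.mpr (Finset.mem_univ (x, y))))

variable [DecidableEq V]

theorem filter_pieceWord_of_arc (hD : SemiTransitive D) {x y : V} (hxy : D x y) (a b : V) :
    (pieceWord D a b).filter (fun z => z = x ∨ z = y) = [x, y, x, y] :=
  chordWord_filter_of_lt_of_lt (hD.1.ne_of_transGen (.single hxy))
    (pairPotential_lt_of_arc hD a b hxy).1 (pairPotential_lt_of_arc hD a b hxy).2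

theorem alternates_representingWord_of_arc (hD : SemiTransitive D) {x y : V} (hxy : D x y) :
    Alternates (representingWord D) x y := by
  have hne := hD.1.ne_of_transGen (.single hxy)
  unfold Alternates representingWord
  rw [List.filter_flatMap, List.flatMap_def]
  refine List.isChain_flatten_of_forall_eq (l := [x, y, x, y, x, y, x, y]) (by simp)
    (by simp [hne, hne.symm]) hne.symm fun m hm => ?_
  obtain ⟨q, -, rfl⟩ := List.mem_map.mp hm
  simp only [List.filter_append, filter_pieceWord_of_arc hD hxy]
  rfl

theorem not_alternates_representingWord (hD : SemiTransitive D) {x y : V} (hne : x ≠ y)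
    (hxy : ¬ D x y) (hyx : ¬ D y x) : ¬ Alternates (representingWord D) x y := by
  have hM : 0 < 2 * Nat.card V := by
    have : Nonempty V := ⟨x⟩
    have := Nat.card_pos (α := V)
    omega
  intro halt
  have hpair : ∀ a b, ((pieceWord D a b).filter (fun z => z = x ∨ z = y) ++
      (pieceWord D b a).filter (fun z => z = x ∨ z = y)).IsChain (· ≠ ·) := fun a b =>
    List.filter_append .. ▸ halt.infix ((infix_representingWord D a b).filter _)
  by_cases hxy' : TransGen D x y
  · have hsep : (pieceWord D x y).filter (fun z => z = x ∨ z = y) = [x, x, y, y] :=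
      chordWord_filter_of_add_lt hne hM (pairPotential_add_lt_of_transGen hD.1 hxy' hxy)
    have hchain := (hpair x y).left_of_append
    rw [hsep] at hchain
    simp at hchain
  by_cases hyx' : TransGen D y x
  · have hsep : (pieceWord D y x).filter (fun z => z = x ∨ z = y) = [y, y, x, x] := by
      rw [← List.filter_eq_or_eq_comm]
      exact chordWord_filter_of_add_lt hne.symm hM (pairPotential_add_lt_of_transGen hD.1 hyx' hyx)
    have hchain := (hpair x y).right_of_append
    rw [hsep] at hchain
    simp at hchain
  have hcross₁ : (pieceWord D x y).filter (fun z => z = x ∨ z = y) = [x, y, x, y] :=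
    chordWord_filter_of_lt_of_lt hne (pairPotential_lt_of_incomparable hD.1 hne hxy' hyx').1
      (pairPotential_lt_of_incomparable hD.1 hne hxy' hyx').2
  have hcross₂ : (pieceWord D y x).filter (fun z => z = x ∨ z = y) = [y, x, y, x] := by
    rw [← List.filter_eq_or_eq_comm]
    exact chordWord_filter_of_lt_of_lt hne.symm
      (pairPotential_lt_of_incomparable hD.1 hne.symm hyx' hxy').1
      (pairPotential_lt_of_incomparable hD.1 hne.symm hyx' hxy').2
  have hchain := hpair x y
  rw [hcross₁, hcross₂] at hchain
  simp at hchain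

theorem SemiTransitive.representable {G : SimpleGraph V} (hG : IsOrientation G D)
    (hD : SemiTransitive D) : Representable G := by
  refine ⟨representingWord D, mem_representingWord D, fun x y hne => ⟨fun hadj => ?_, ?_⟩⟩
  · rcases hG.arc_of_adj x y hadj with hxy | hyx
    · exact alternates_representingWord_of_arc hD hxy
    · rw [Alternates, ← List.filter_eq_or_eq_comm]
      exact alternates_representingWord_of_arc hD hyx
  · contrapose
    intro hadj
    exact not_alternates_representingWord hD hne (fun h => hadj (hG.adj_of_arc x y h))
      (fun h => hadj (hG.adj_of_arc y x h).symm)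

end RepresentingWord

namespace SimpleGraph

variable {V : Type*} {G : SimpleGraph V}

def walkOfPath (G : SimpleGraph V) (v : ℕ → V) :
    (t : ℕ) → (∀ i < t, G.Adj (v i) (v (i + 1))) → G.Walk (v 0) (v t)
  | 0, _ => .nil
  | t + 1, hv => (G.walkOfPath v t fun i hi => hv i (by omega)).concat (hv t (by omega))

theorem support_walkOfPath (v : ℕ → V) (t : ℕ) (hv : ∀ i < t, G.Adj (v i) (v (i + 1))) :
    (G.walkOfPath v t hv).support = (List.range (t + 1)).map v := by
  induction t with
  | zero => rfl
  | succ t ih => simp [walkOfPath, Walk.support_concat, ih, List.range_succ (n := t + 1)]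

theorem length_walkOfPath (v : ℕ → V) (t : ℕ) (hv : ∀ i < t, G.Adj (v i) (v (i + 1))) :
    (G.walkOfPath v t hv).length = t := by
  induction t with
  | zero => rfl
  | succ t ih => simp [walkOfPath, Walk.length_concat, ih]

theorem girth_le_of_path {v : ℕ → V} {t : ℕ} (hv : ∀ i < t, G.Adj (v i) (v (i + 1)))
    (hdistinct : ∀ i j, i ≤ t → j ≤ t → i ≠ j → v i ≠ v j) (hclose : G.Adj (v t) (v 0))
    (ht : 2 ≤ t) : G.girth ≤ t + 1 := by
  have hpath : (G.walkOfPath v t hv).IsPath := by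
    rw [Walk.isPath_def, support_walkOfPath]
    refine List.Nodup.map_on (fun i hi j hj hij => ?_) List.nodup_range
    by_contra hne
    simp only [List.mem_range] at hi hj
    exact hdistinct i j (by omega) (by omega) hne hij
  have hcycle : (Walk.cons hclose (G.walkOfPath v t hv)).IsCycle :=
    Walk.isCycle_iff_isPath_tail_and_le_length.mpr
      ⟨by simpa using hpath, by rw [Walk.length_cons, length_walkOfPath]; omega⟩
  simpa [length_walkOfPath] using girth_le_length hcycle

end SimpleGraph

section ColorOrientation

variable {V α : Type*} [LinearOrder α] {G : SimpleGraph V}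

def colorOrientation (C : G.Coloring α) (u v : V) : Prop :=
  G.Adj u v ∧ C u < C v

theorem isOrientation_colorOrientation (C : G.Coloring α) :
    IsOrientation G (colorOrientation C) where
  adj_of_arc _ _ h := h.1
  arc_of_adj _ _ h := (lt_or_gt_of_ne (C.valid h)).imp (⟨h, ·⟩) (⟨h.symm, ·⟩)
  asymm _ _ h h' := lt_asymm h.2 h'.2

theorem colorOrientation_lt_of_transGen (C : G.Coloring α) {u v : V}
    (h : TransGen (colorOrientation C) u v) : C u < C v := by
  induction h with
  | single h => exact h.2
  | tail _ h ih => exact ih.trans h.2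

theorem digraphAcyclic_colorOrientation (C : G.Coloring α) :
    DigraphAcyclic (colorOrientation C) :=
  fun _ h => lt_irrefl _ (colorOrientation_lt_of_transGen C h)

theorem semiTransitive_colorOrientation {n : ℕ} (C : G.Coloring (Fin n)) (hn : n < G.girth) :
    SemiTransitive (colorOrientation C) := by
  refine ⟨digraphAcyclic_colorOrientation C, ?_⟩
  rintro ⟨t, v, ht, hdistinct, harcs, hclose, -⟩
  have hcolor : ∀ i ≤ t, (C (v 0) : ℕ) + i ≤ C (v i) := by
    intro i
    induction i with
    | zero => simp
    | succ i ih =>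
      intro hi
      have := Fin.lt_def.mp (harcs i (by omega)).2
      have := ih (by omega)
      omega
  have hcolor_t := hcolor t le_rfl
  have hcolor_lt := (C (v t)).isLt
  have hgirth := G.girth_le_of_path (fun i hi => (harcs i hi).1) hdistinct hclose.1.symm (by omega)
  omega

end ColorOrientation

/-- If a graph has girth strictly greater than its chromatic number, then it admits a
semi-transitive orientation and is therefore representable. -/
theorem stmt15 {V : Type*} [Fintype V] [DecidableEq V] (G : SimpleGraph V)
    (h : G.chromaticNumber < G.girth) :
    (∃ D : V → V → Prop, IsOrientation G D ∧ SemiTransitive D) ∧ Representable G := by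
  obtain ⟨n, hn⟩ := ENat.ne_top_iff_exists.mp (h.trans_le le_top).ne
  obtain ⟨C⟩ := G.chromaticNumber_le_iff_colorable.mp hn.ge
  have hng : n < G.girth := by
    rw [← hn] at h
    exact_mod_cast h
  have hD := semiTransitive_colorOrientation C hng
  exact ⟨⟨_, isOrientation_colorOrientation C, hD⟩,
    hD.representable (isOrientation_colorOrientation C)⟩
end
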